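/- arXiv:1707.08348 — 15 statements merged into one kernel-verified Lean document; each statement's English description precedes it below -/
import Mathlib

section
/- Let V be a vector space of dimension δ over a finite field F, and let a, b be non-negative integers. If v₁,…,vₐ and w₁,…,wₐ are elements of V with dim span{v₁,…,vₐ} ≥ δ − b and dim span{w₁,…,wₐ} ≥ δ − b, then there exist z₁,…,z_b ∈ V such that span{v₁,…,vₐ, z₁,…,z_b} = V and span{w₁,…,wₐ, z₁,…,z_b} = V. -/
private lemma exists_notMem {F V : Type*} [Field F] [AddCommGroup V] [Module F V]
    {S : Submodule F V} (h : S ≠ ⊤) : ∃ x, x ∉ S := by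
  by_contra hc
  push_neg at hc
  exact h (Submodule.eq_top_iff'.mpr hc)

private lemma aux_exists_x {F V : Type*} [Field F] [AddCommGroup V] [Module F V]
    (U W : Submodule F V) :
    ∃ x : V, (U ≠ ⊤ → x ∉ U) ∧ (W ≠ ⊤ → x ∉ W) := by
  by_cases hU : U = ⊤
  · by_cases hW : W = ⊤
    · exact ⟨0, fun h => absurd hU h, fun h => absurd hW h⟩
    · obtain ⟨x, hx⟩ := exists_notMem hW
      exact ⟨x, fun h => absurd hU h, fun _ => hx⟩
  · by_cases hW : W = ⊤
    · obtain ⟨x, hx⟩ := exists_notMem hU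
      exact ⟨x, fun _ => hx, fun h => absurd hW h⟩
    · obtain ⟨u, hu⟩ := exists_notMem hU
      obtain ⟨w, hw⟩ := exists_notMem hW
      by_cases huW : u ∈ W
      · by_cases hwU : w ∈ U
        · refine ⟨u + w, fun _ h => ?_, fun _ h => ?_⟩
          · exact hu (by simpa using U.sub_mem h hwU)
          · exact hw (by simpa using W.sub_mem h huW)
        · exact ⟨w, fun _ => hwU, fun _ => hw⟩
      · exact ⟨u, fun _ => hu, fun _ => huW⟩

private lemma aux_main {F V : Type*} [Field F] [AddCommGroup V] [Module F V]
    [FiniteDimensional F V] (b : ℕ) :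
    ∀ U W : Submodule F V,
      Module.finrank F V - b ≤ Module.finrank F U →
      Module.finrank F V - b ≤ Module.finrank F W →
      ∃ z : Fin b → V,
        U ⊔ Submodule.span F (Set.range z) = ⊤ ∧
        W ⊔ Submodule.span F (Set.range z) = ⊤ := by
  induction b with
  | zero =>
    intro U W hU hW
    have hU' : U = ⊤ :=
      Submodule.eq_top_of_finrank_eq (le_antisymm (Submodule.finrank_le U) (by simpa using hU))
    have hW' : W = ⊤ :=
      Submodule.eq_top_of_finrank_eq (le_antisymm (Submodule.finrank_le W) (by simpa using hW))
    exact ⟨fun i => i.elim0, by simp [hU'], by simp [hW']⟩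
  | succ b ih =>
    intro U W hU hW
    obtain ⟨x, hxU, hxW⟩ := aux_exists_x U W
    have key : ∀ S : Submodule F V, (S ≠ ⊤ → x ∉ S) →
        Module.finrank F V - (b + 1) ≤ Module.finrank F S →
        Module.finrank F V - b ≤ Module.finrank F ↥(S ⊔ Submodule.span F {x}) := by
      intro S hxS hS
      by_cases hSt : S = ⊤
      · have : S ⊔ Submodule.span F {x} = ⊤ := by simp [hSt]
        rw [this, finrank_top]
        omega
      · have hlt : S < S ⊔ Submodule.span F {x} :=
          lt_of_le_of_ne le_sup_left (fun h => (hxS hSt)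
            (h ▸ Submodule.mem_sup_right (Submodule.mem_span_singleton_self x)))
        have := Submodule.finrank_lt_finrank_of_lt hlt
        omega
    obtain ⟨z, hz1, hz2⟩ := ih (U ⊔ Submodule.span F {x}) (W ⊔ Submodule.span F {x})
      (key U hxU hU) (key W hxW hW)
    refine ⟨Fin.cons x z, ?_, ?_⟩
    · rw [Fin.range_cons, Submodule.span_insert, ← sup_assoc]
      exact hz1
    · rw [Fin.range_cons, Submodule.span_insert, ← sup_assoc]
      exact hz2

theorem stmt_1 {F V : Type*} [Field F] [Fintype F] [AddCommGroup V] [Module F V]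
    [FiniteDimensional F V] (a b : ℕ) (v w : Fin a → V)
    (hv : Module.finrank F V - b ≤ Module.finrank F (Submodule.span F (Set.range v)))
    (hw : Module.finrank F V - b ≤ Module.finrank F (Submodule.span F (Set.range w))) :
    ∃ z : Fin b → V,
      Submodule.span F (Set.range v ∪ Set.range z) = ⊤ ∧
      Submodule.span F (Set.range w ∪ Set.range z) = ⊤ := by
  obtain ⟨z, hz1, hz2⟩ := aux_main b (Submodule.span F (Set.range v))
    (Submodule.span F (Set.range w)) hv hw
  exact ⟨z, by rw [Submodule.span_union]; exact hz1, by rw [Submodule.span_union]; exact hz2⟩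
end

section
/- Let F be a finite field with q elements and α ≤ β. Let R be an α×β matrix and S an α×γ matrix over F such that the α×(β+γ) block matrix (R S) has rank α. Then the probability that a uniformly random γ×β matrix Z over F satisfies rank(R + SZ) = α is strictly greater than 1 − q^α/(q^β(q−1)). -/
/-!
Call `Z` bad when `R + S Z` has a nonzero left-kernel vector `v`. Each bad `Z` has at least `q - 1`
such `v` (a nonzero subspace has at least `q` elements). Conversely, for a fixed `v ≠ 0` the
equation `v (R + S Z) = 0` reads `(v S) Z = -(v R)`: it has no solution when `v S = 0`, since then
`v R ≠ 0` by the rank hypothesis on `(R S)`, and otherwise `Z ↦ (v S) Z` is a surjective linear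
map onto `F^β`, so exactly a `q^{-β}` fraction of all `Z` solve it. Double counting the pairs
`(Z, v)` bounds the fraction of bad `Z` by `(q^α - 1) / (q^β (q - 1))`.
-/

open Matrix Finset

section

variable {K : Type*} [Field K]

theorem Matrix.rank_eq_card_iff_ker_vecMulLinear_eq_bot {m n : Type*} [Fintype m] [Fintype n]
    (M : Matrix m n K) : M.rank = Fintype.card m ↔ LinearMap.ker M.vecMulLinear = ⊥ := by
  rw [LinearMap.ker_eq_bot, coe_vecMulLinear, vecMul_injective_iff,
    linearIndependent_iff_card_eq_finrank_span, rank_eq_finrank_span_row, eq_comm]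
  rfl

theorem Submodule.card_le_card_of_ne_bot [Fintype K] {V : Type*} [AddCommGroup V] [Module K V]
    [Finite V] {W : Submodule K V} (hW : W ≠ ⊥) : Fintype.card K ≤ Nat.card W := by
  obtain ⟨w, hw, hw0⟩ := W.ne_bot_iff.mp hW
  rw [← Nat.card_eq_fintype_card]
  refine Nat.card_le_card_of_injective (fun c => ⟨c • w, W.smul_mem c hw⟩) fun c d h => ?_
  exact smul_left_injective K hw0 (congrArg Subtype.val h)

theorem AddMonoidHom.card_fiber_mul_card_of_surjective {G M : Type*} [AddGroup G] [Fintype G]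
    [AddMonoid M] [Fintype M] [DecidableEq M] (f : G →+ M) (hf : Function.Surjective f)
    (y : M) : #{g | f g = y} * Fintype.card M = Fintype.card G := by
  have hfibers := card_eq_sum_card_fiberwise (f := f) (s := univ) (t := univ)
    fun _ _ => mem_univ _
  rw [sum_congr rfl fun x _ => AddMonoidHom.card_fiber_eq_of_mem_range f (hf x) (hf y),
    sum_const, card_univ, card_univ, smul_eq_mul] at hfibers
  rw [hfibers, mul_comm]

theorem Matrix.vecMul_surjective_of_ne_zero {m n : Type*} [Fintype m] [DecidableEq m]
    {s : m → K} (hs : s ≠ 0) : Function.Surjective fun Z : Matrix m n K => s ᵥ* Z := by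
  obtain ⟨i, hi⟩ := Function.ne_iff.mp hs
  intro t
  refine ⟨vecMulVec (Pi.single i (s i)⁻¹) t, ?_⟩
  simp [vecMul_vecMulVec, dotProduct_single, mul_inv_cancel₀ hi]

variable [Fintype K] [DecidableEq K]

theorem Matrix.card_vecMul_eq_mul_card_pow {m n : Type*} [Fintype m] [DecidableEq m] [Fintype n]
    [DecidableEq n] {s : m → K} (hs : s ≠ 0) (t : n → K) :
    #{Z : Matrix m n K | s ᵥ* Z = t} * Fintype.card K ^ Fintype.card n =
      Fintype.card (Matrix m n K) := by
  rw [← Fintype.card_fun]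
  exact AddMonoidHom.card_fiber_mul_card_of_surjective
    (AddMonoidHom.mk' (fun Z : Matrix m n K => s ᵥ* Z) fun X Y => vecMul_add X Y s)
    (vecMul_surjective_of_ne_zero hs) t

theorem Matrix.card_le_card_nonzero_vecMul_eq_zero_add_one {m n : Type*} [Fintype m]
    [DecidableEq m] [Fintype n] [DecidableEq n] (M : Matrix m n K) (hM : M.rank ≠ Fintype.card m) :
    Fintype.card K ≤ #{v ∈ univ.erase 0 | v ᵥ* M = 0} + 1 := by
  have hker : LinearMap.ker M.vecMulLinear ≠ ⊥ :=
    mt (rank_eq_card_iff_ker_vecMulLinear_eq_bot M).mpr hM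
  rw [filter_erase, card_erase_add_one (by simp)]
  refine (Submodule.card_le_card_of_ne_bot hker).trans (le_of_eq ?_)
  classical
  simp [Nat.card_eq_fintype_card, Fintype.card_subtype]

theorem Matrix.card_vecMul_add_mul_eq_zero_mul_le {m n l : Type*} [Fintype m] [Fintype n]
    [DecidableEq n] [Fintype l] [DecidableEq l] (R : Matrix m n K) (S : Matrix m l K)
    (hRS : LinearMap.ker (fromCols R S).vecMulLinear = ⊥) {v : m → K} (hv : v ≠ 0) :
    #{Z : Matrix l n K | v ᵥ* (R + S * Z) = 0} * Fintype.card K ^ Fintype.card n ≤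
      Fintype.card (Matrix l n K) := by
  have hvRS : Sum.elim (v ᵥ* R) (v ᵥ* S) ≠ 0 := by
    rw [← vecMul_fromCols]
    exact fun h => hv ((LinearMap.ker_eq_bot'.mp hRS) v h)
  have hfilter : ∀ Z : Matrix l n K, v ᵥ* (R + S * Z) = 0 ↔ (v ᵥ* S) ᵥ* Z = -(v ᵥ* R) := by
    intro Z
    rw [vecMul_add, ← vecMul_vecMul, add_eq_zero_iff_eq_neg']
  simp_rw [hfilter]
  by_cases hS : v ᵥ* S = 0
  · have hR : v ᵥ* R ≠ 0 := fun hR => hvRS (by rw [hR, hS]; exact Sum.elim_zero_zero)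
    simp [hS, hR, eq_comm (a := (0 : n → K))]
  · exact (card_vecMul_eq_mul_card_pow hS _).le

theorem Matrix.card_rank_add_mul_ne_mul_le {m n l : Type*} [Fintype m] [DecidableEq m] [Fintype n]
    [DecidableEq n] [Fintype l] [DecidableEq l] (R : Matrix m n K) (S : Matrix m l K)
    (hRS : LinearMap.ker (fromCols R S).vecMulLinear = ⊥) :
    (#{Z : Matrix l n K | (R + S * Z).rank ≠ Fintype.card m} : ℚ) * (Fintype.card K - 1) *
        Fintype.card K ^ Fintype.card n ≤
      (Fintype.card K ^ Fintype.card m - 1) * Fintype.card (Matrix l n K) := by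
  have hq : (0 : ℚ) < Fintype.card K ^ Fintype.card n := by positivity
  have hcount := card_nsmul_le_card_nsmul (R := ℚ) (fun Z (v : m → K) => v ᵥ* (R + S * Z) = 0)
    (s := {Z : Matrix l n K | (R + S * Z).rank ≠ Fintype.card m}) (t := univ.erase 0)
    (m := Fintype.card K - 1) (n := Fintype.card (Matrix l n K) / Fintype.card K ^ Fintype.card n)
    (fun Z hZ => by
      rw [sub_le_iff_le_add]
      exact_mod_cast card_le_card_nonzero_vecMul_eq_zero_add_one _ (mem_filter.mp hZ).2)
    (fun v hv => by
      rw [le_div_iff₀ hq]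
      exact_mod_cast (Nat.mul_le_mul_right _ (card_le_card (filter_subset_filter _
        (subset_univ _)))).trans (card_vecMul_add_mul_eq_zero_mul_le R S hRS (ne_of_mem_erase hv)))
  rw [nsmul_eq_mul, nsmul_eq_mul, card_erase_of_mem (mem_univ _), card_univ, Fintype.card_fun,
    Nat.cast_sub (Nat.one_le_pow _ _ Fintype.card_pos), mul_div_assoc', le_div_iff₀ hq] at hcount
  exact_mod_cast hcount

end

theorem stmt_2_general {F : Type*} [Field F] [Fintype F] [DecidableEq F]
    (α β γ : ℕ)
    (R : Matrix (Fin α) (Fin β) F) (S : Matrix (Fin α) (Fin γ) F)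
    (hrank : (Matrix.of (fun i => Sum.elim (R i) (S i)) :
        Matrix (Fin α) (Fin β ⊕ Fin γ) F).rank = α) :
    (1 : ℚ) - (Fintype.card F : ℚ) ^ α /
        ((Fintype.card F : ℚ) ^ β * ((Fintype.card F : ℚ) - 1)) <
      (Nat.card {Z : Matrix (Fin γ) (Fin β) F // (R + S * Z).rank = α} : ℚ) /
        (Nat.card (Matrix (Fin γ) (Fin β) F) : ℚ) := by
  have hRS : LinearMap.ker (fromCols R S).vecMulLinear = ⊥ :=
    (rank_eq_card_iff_ker_vecMulLinear_eq_bot _).mp (by rwa [Fintype.card_fin])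
  have hbad := card_rank_add_mul_ne_mul_le R S hRS
  have hsplit := card_filter_add_card_filter_not (s := univ)
    fun Z : Matrix (Fin γ) (Fin β) F => (R + S * Z).rank = α
  simp only [Fintype.card_fin, ← ne_eq, card_univ] at hbad hsplit
  rw [Nat.card_eq_fintype_card, Nat.card_eq_fintype_card, Fintype.card_subtype, ← hsplit]
  rw [← hsplit] at hbad
  set good := #{Z : Matrix (Fin γ) (Fin β) F | (R + S * Z).rank = α}
  set bad := #{Z : Matrix (Fin γ) (Fin β) F | (R + S * Z).rank ≠ α}
  set q := Fintype.card F
  have hq : (1 : ℚ) < q := by exact_mod_cast Fintype.one_lt_card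
  have hN : (0 : ℚ) < good + bad := by exact_mod_cast hsplit ▸ Fintype.card_pos
  push_cast at hbad ⊢
  have hbad_lt : (bad : ℚ) / (good + bad) < q ^ α / (q ^ β * (q - 1)) := by
    rw [div_lt_div_iff₀ hN (by have := sub_pos.mpr hq; positivity)]
    linarith
  calc 1 - (q : ℚ) ^ α / (q ^ β * (q - 1)) < 1 - bad / (good + bad) := by linarith
    _ = good / (good + bad) := by field_simp; ring

theorem stmt_2 {F : Type*} [Field F] [Fintype F] [DecidableEq F]
    (α β γ : ℕ) (hαβ : α ≤ β)
    (R : Matrix (Fin α) (Fin β) F) (S : Matrix (Fin α) (Fin γ) F)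
    (hrank : (Matrix.of (fun i => Sum.elim (R i) (S i)) :
        Matrix (Fin α) (Fin β ⊕ Fin γ) F).rank = α) :
    (1 : ℚ) - (Fintype.card F : ℚ) ^ α /
        ((Fintype.card F : ℚ) ^ β * ((Fintype.card F : ℚ) - 1)) <
      (Nat.card {Z : Matrix (Fin γ) (Fin β) F // (R + S * Z).rank = α} : ℚ) /
        (Nat.card (Matrix (Fin γ) (Fin β) F) : ℚ) :=
  stmt_2_general α β γ R S hrank
end

section
/- Let F be a finite field and u, v, n, t positive integers with n ≤ min{u, v} and t + n = u + v. Suppose A₁, A₂ ∈ M_{n×u}(F), B ∈ M_{n×v}(F), D₁, D₂ ∈ M_{t×u}(F) satisfy rank(B A₁) = rank(B A₂) = n and rank of the vertical block (A₁; D₁) = rank(A₂; D₂) = u. Then there exists C ∈ M_{t×v}(F) such that both block matrices (B A₁; C D₁) and (B A₂; C D₂) are invertible, except when |F| = 2, n = v and det B ≠ 0. -/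
/-!
Let `W` be the column space of `B`, `K = ker B` and `Yᵢ = Aᵢ⁻¹ W`; since `(B Aᵢ)` has full row
rank, `dim Yᵢ = u + rank B - n`. Take `C = X B + E`, where `E` maps `K` injectively into a
subspace `L ⊆ Fᵗ` and vanishes on a complement of `K`. A vector `(x, y)` in the kernel of
`(B Aᵢ; C Dᵢ)` has `y ∈ Yᵢ` and `(Dᵢ - X Aᵢ) y = -E x ∈ L`, so the block matrix is invertible
as soon as `Dᵢ - X Aᵢ` is injective on `Yᵢ` and `(Dᵢ - X Aᵢ) Yᵢ ∩ L = 0`.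

For a fixed nonzero `y ∈ Yᵢ` (then `Aᵢ y ≠ 0`, as `(Aᵢ; Dᵢ)` is injective) the condition
`X Aᵢ y = Dᵢ y` cuts out `|F|^(t(n-1))` matrices `X`, and it depends only on the line through `y`;
so at most `2 (|F|^dim Yᵢ - 1) / (|F| - 1) · |F|^(t(n-1))` matrices are bad for `i = 1` or `2`.
This is less than `|F|^(tn)` unless `|F| = 2` and `dim Yᵢ = t`, i.e. `rank B = v`, which forces
`n = v`: the excluded case. Finally `dim (Dᵢ - X Aᵢ) Yᵢ + dim K ≤ t`, and a common `L` of
dimension `dim K` avoiding both images is built one vector at a time, because a vector space is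
never the union of two proper subspaces.
-/

open Module Matrix Finset

namespace Submodule

theorem exists_notMem_notMem_of_ne_top {R V : Type*} [Ring R] [AddCommGroup V] [Module R V]
    {P₁ P₂ : Submodule R V} (h₁ : P₁ ≠ ⊤) (h₂ : P₂ ≠ ⊤) : ∃ x, x ∉ P₁ ∧ x ∉ P₂ := by
  obtain ⟨a, -, ha₁⟩ := SetLike.exists_of_lt h₁.lt_top
  obtain ⟨c, -, hc₂⟩ := SetLike.exists_of_lt h₂.lt_top
  by_cases ha₂ : a ∈ P₂
  · by_cases hc₁ : c ∈ P₁
    · refine ⟨a + c, fun h => ha₁ ?_, fun h => hc₂ ?_⟩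
      · simpa using P₁.sub_mem h hc₁
      · simpa using P₂.sub_mem h ha₂
    · exact ⟨c, hc₁, hc₂⟩
  · exact ⟨a, ha₁, ha₂⟩

variable {F V : Type*} [Field F] [AddCommGroup V] [Module F V]

theorem exists_finrank_eq_disjoint_disjoint [FiniteDimensional F V] {T₁ T₂ : Submodule F V}
    {k : ℕ} (h₁ : finrank F T₁ + k ≤ finrank F V) (h₂ : finrank F T₂ + k ≤ finrank F V) :
    ∃ L : Submodule F V, finrank F L = k ∧ Disjoint T₁ L ∧ Disjoint T₂ L := by
  induction k with
  | zero => exact ⟨⊥, finrank_bot F V, disjoint_bot_right, disjoint_bot_right⟩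
  | succ k ih =>
    obtain ⟨L, hL, hd₁, hd₂⟩ := ih (by omega) (by omega)
    have sup_ne_top {T : Submodule F V} (hd : Disjoint T L)
        (hT : finrank F T + (k + 1) ≤ finrank F V) : T ⊔ L ≠ ⊤ := fun htop => by
      have := finrank_sup_add_finrank_inf_eq T L
      rw [htop, hd.eq_bot, finrank_bot, finrank_top] at this
      omega
    obtain ⟨x, hx₁, hx₂⟩ :=
      exists_notMem_notMem_of_ne_top (sup_ne_top hd₁ h₁) (sup_ne_top hd₂ h₂)
    have hxL : x ∉ L := fun h => hx₁ (mem_sup_right h)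
    refine ⟨L ⊔ F ∙ x, ?_,
      hd₁.disjoint_sup_right_of_disjoint_sup_left (disjoint_span_singleton_of_notMem hx₁),
      hd₂.disjoint_sup_right_of_disjoint_sup_left (disjoint_span_singleton_of_notMem hx₂)⟩
    have := finrank_sup_add_finrank_inf_eq L (F ∙ x)
    rw [(disjoint_span_singleton_of_notMem hxL).eq_bot, finrank_bot,
      finrank_span_singleton (by rintro rfl; exact hxL L.zero_mem), hL] at this
    omega

theorem finrank_comap_add_finrank_eq [FiniteDimensional F V] {N : Type*} [AddCommGroup N]
    [Module F N] [FiniteDimensional F N] (f : V →ₗ[F] N) (W : Submodule F N)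
    (h : W ⊔ LinearMap.range f = ⊤) :
    finrank F (W.comap f) + finrank F N = finrank F V + finrank F W := by
  have hker : LinearMap.ker (W.mkQ ∘ₗ f) = W.comap f := by
    rw [LinearMap.ker_comp, ker_mkQ]
  have hrange : LinearMap.range (W.mkQ ∘ₗ f) = ⊤ := by
    rw [LinearMap.range_comp, map_mkQ_eq_top, h]
  have := (W.mkQ ∘ₗ f).finrank_range_add_finrank_ker
  rw [hker, hrange, finrank_top] at this
  have := W.finrank_quotient_add_finrank
  omega

end Submodule

theorem LinearMap.exists_range_le_disjoint_ker {F V T : Type*} [Field F] [AddCommGroup V]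
    [Module F V] [AddCommGroup T] [Module F T] {K : Submodule F V} {L : Submodule F T}
    [FiniteDimensional F K] [FiniteDimensional F L] (h : finrank F K = finrank F L) :
    ∃ E : V →ₗ[F] T, LinearMap.range E ≤ L ∧ Disjoint K (LinearMap.ker E) := by
  obtain ⟨g, hg⟩ := K.subtype.exists_leftInverse_of_injective K.ker_subtype
  let e := LinearEquiv.ofFinrankEq K L h
  refine ⟨L.subtype ∘ₗ e.toLinearMap ∘ₗ g,
    (LinearMap.range_comp_le_range _ _).trans L.range_subtype.le, ?_⟩
  rw [Submodule.disjoint_def]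
  intro x hxK hx
  have hgx : g x = ⟨x, hxK⟩ := LinearMap.congr_fun hg ⟨x, hxK⟩
  simpa [hgx] using hx

namespace Matrix

section Field

variable {F : Type*} [Field F] {l m n o : Type*} [Fintype n] [Fintype o]

theorem rank_add_finrank_ker_mulVecLin (M : Matrix m n F) :
    M.rank + finrank F (LinearMap.ker M.mulVecLin) = Fintype.card n := by
  rw [rank, LinearMap.finrank_range_add_finrank_ker, finrank_fintype_fun_eq_card]

theorem mulVec_injective_of_rank_eq_card_width {M : Matrix m n F}
    (h : M.rank = Fintype.card n) : Function.Injective M.mulVec := by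
  have := M.rank_add_finrank_ker_mulVecLin
  rw [h, Nat.add_eq_left, Submodule.finrank_eq_zero, LinearMap.ker_eq_bot] at this
  exact this

theorem rank_eq_card_width_of_mulVec_injective {M : Matrix m n F}
    (h : Function.Injective M.mulVec) : M.rank = Fintype.card n := by
  rw [rank, LinearMap.finrank_range_of_inj h, finrank_fintype_fun_eq_card]

theorem eq_zero_of_rank_fromRows {A : Matrix m n F} {D : Matrix l n F}
    (h : (fromRows A D).rank = Fintype.card n) (y : n → F) (hA : A *ᵥ y = 0)
    (hD : D *ᵥ y = 0) : y = 0 :=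
  mulVec_injective_of_rank_eq_card_width h (by simp [hA, hD])

theorem sup_range_mulVecLin_eq_top_of_rank_fromCols [Fintype m] {B : Matrix m n F}
    {A : Matrix m o F} (h : (fromCols B A).rank = Fintype.card m) :
    LinearMap.range B.mulVecLin ⊔ LinearMap.range A.mulVecLin = ⊤ := by
  have htop : LinearMap.range (fromCols B A).mulVecLin = ⊤ :=
    Submodule.eq_top_of_finrank_eq (by rw [finrank_fintype_fun_eq_card]; exact h)
  rw [eq_top_iff, ← htop]
  rintro _ ⟨z, rfl⟩
  simpa using Submodule.add_mem_sup (LinearMap.mem_range_self B.mulVecLin (z ∘ Sum.inl))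
    (LinearMap.mem_range_self A.mulVecLin (z ∘ Sum.inr))

theorem finrank_comap_add_card_eq_of_rank_fromCols [Fintype m] {B : Matrix m n F}
    {A : Matrix m o F} (h : (fromCols B A).rank = Fintype.card m) :
    finrank F ((LinearMap.range B.mulVecLin).comap A.mulVecLin) + Fintype.card m =
      Fintype.card o + B.rank := by
  have := Submodule.finrank_comap_add_finrank_eq A.mulVecLin _
    (sup_range_mulVecLin_eq_top_of_rank_fromCols h)
  rwa [finrank_fintype_fun_eq_card, finrank_fintype_fun_eq_card] at this

theorem fromBlocks_mulVec_injective [Fintype m] [DecidableEq n] {B : Matrix m n F}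
    {A : Matrix m o F} {D : Matrix l o F} {X : Matrix l m F} {E : (n → F) →ₗ[F] l → F}
    {L : Submodule F (l → F)}
    (hE : Disjoint (LinearMap.ker B.mulVecLin) (LinearMap.ker E)) (hEL : LinearMap.range E ≤ L)
    (hX : Disjoint ((LinearMap.range B.mulVecLin).comap A.mulVecLin)
      (LinearMap.ker (D - X * A).mulVecLin))
    (hL : Disjoint (((LinearMap.range B.mulVecLin).comap A.mulVecLin).map
      (D - X * A).mulVecLin) L) :
    Function.Injective (fromBlocks B A (X * B + LinearMap.toMatrix' E) D).mulVec := by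
  refine (injective_iff_map_eq_zero (mulVecLin _)).mpr fun z hz => ?_
  rw [mulVecLin_apply, fromBlocks_mulVec] at hz
  set x := z ∘ Sum.inl
  set y := z ∘ Sum.inr
  have htop : B *ᵥ x + A *ᵥ y = 0 := funext fun i => congr_fun hz (Sum.inl i)
  have hbot : X *ᵥ (B *ᵥ x) + E x + D *ᵥ y = 0 := by
    rw [mulVec_mulVec, ← LinearMap.toMatrix'_mulVec, ← add_mulVec]
    exact funext fun i => congr_fun hz (Sum.inr i)
  have hAy : A *ᵥ y = B *ᵥ (-x) := by
    rw [mulVec_neg, eq_neg_iff_add_eq_zero, add_comm, htop]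
  have hyY : y ∈ (LinearMap.range B.mulVecLin).comap A.mulVecLin := ⟨-x, hAy.symm⟩
  -- `(D - X A) y = E (-x)` lies both in the image of `A⁻¹ (range B)` and in `L`
  have hψ : (D - X * A).mulVecLin y = E (-x) := by
    rw [mulVecLin_apply, sub_mulVec, ← mulVec_mulVec, hAy, mulVec_neg, mulVec_neg, map_neg,
      sub_neg_eq_add, eq_neg_iff_add_eq_zero, ← hbot]
    abel
  have hψ0 := Submodule.disjoint_def.mp hL _ (Submodule.mem_map_of_mem hyY)
    (hψ ▸ hEL (LinearMap.mem_range_self E _))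
  have hy : y = 0 := Submodule.disjoint_def.mp hX y hyY hψ0
  rw [hy, mulVec_zero, add_zero] at htop hbot
  rw [htop, mulVec_zero, zero_add] at hbot
  have hx : x = 0 := Submodule.disjoint_def.mp hE x htop hbot
  ext (i | i)
  · exact congr_fun hx i
  · exact congr_fun hy i

end Field

section Counting

variable {F : Type*} [Field F] [Fintype F] [DecidableEq F] {m n o : Type*}
  [Fintype m] [DecidableEq m] [Fintype n] [DecidableEq n] [Fintype o]

theorem card_filter_mulVec_eq_le {w : n → F} (hw : w ≠ 0) (c : m → F) :
    #{X : Matrix m n F | X *ᵥ w = c} ≤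
      Fintype.card F ^ (Fintype.card m * (Fintype.card n - 1)) := by
  obtain ⟨j, hj⟩ := Function.ne_iff.mp hw
  -- a solution `X` is determined by its columns other than `j`, since `w j ≠ 0`
  have hinj : Set.InjOn (fun (X : Matrix m n F) i (k : {k // k ≠ j}) => X i k)
      {X | X *ᵥ w = c} := by
    intro X₁ h₁ X₂ h₂ hX
    have hoff : ∀ i, ∀ k ≠ j, X₁ i k = X₂ i k := fun i k hk => congr_fun (congr_fun hX i) ⟨k, hk⟩
    ext i k
    by_cases hk : k = j
    · subst hk
      have h := congr_fun (show (X₁ - X₂) *ᵥ w = 0 by rw [sub_mulVec, h₁, h₂, sub_self]) i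
      rw [mulVec, dotProduct, sum_eq_single k (fun k' _ hk' => by simp [hoff i k' hk'])
        (by simp)] at h
      exact sub_eq_zero.mp ((mul_eq_zero.mp h).resolve_right hj)
    · exact hoff i k hk
  calc #{X : Matrix m n F | X *ᵥ w = c}
      ≤ #(univ : Finset (m → {k // k ≠ j} → F)) :=
        card_le_card_of_injOn _ (fun _ _ => mem_univ _) (by simpa using hinj)
    _ = Fintype.card F ^ (Fintype.card m * (Fintype.card n - 1)) := by
        simp [Fintype.card_subtype_compl, ← pow_mul, mul_comm]

open Classical in
theorem card_filter_exists_mulVec_mul_le (A : Matrix n o F) (D : Matrix m o F)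
    (hAD : ∀ y, A *ᵥ y = 0 → D *ᵥ y = 0 → y = 0) (Y : Submodule F (o → F)) :
    #{X : Matrix m n F | ∃ y ∈ Y, y ≠ 0 ∧ X *ᵥ (A *ᵥ y) = D *ᵥ y} * (Fintype.card F - 1) ≤
      (Fintype.card F ^ finrank F Y - 1) *
        Fintype.card F ^ (Fintype.card m * (Fintype.card n - 1)) := by
  have hY : #{y | y ∈ Y ∧ y ≠ 0} = Fintype.card F ^ finrank F Y - 1 := by
    rw [← Module.card_eq_pow_finrank, filter_and, filter_ne', inter_erase, inter_univ,
      card_erase_of_mem (by simp), Fintype.card_subtype]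
  rw [← hY]
  refine card_mul_le_card_mul (fun X y => y ∈ Y ∧ y ≠ 0 ∧ X *ᵥ (A *ᵥ y) = D *ᵥ y) ?_ ?_
  · intro X hX
    obtain ⟨y, hyY, hy0, hXy⟩ := (mem_filter.mp hX).2
    calc Fintype.card F - 1 = #(univ.erase (0 : F)) := by simp
      _ ≤ _ := card_le_card_of_injOn (· • y) ?_ (smul_left_injective F hy0).injOn
    intro c hc
    have hc0 : c ≠ 0 := ne_of_mem_erase hc
    simp [Y.smul_mem c hyY, hc0, hy0, mulVec_smul, ← hXy]
  · intro y hy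
    by_cases hAy : A *ᵥ y = 0
    · refine (card_eq_zero.mpr (filter_eq_empty_iff.mpr ?_)).trans_le (Nat.zero_le _)
      rintro X - ⟨-, hy0, hXy⟩
      exact hy0 (hAD y hAy (by rw [← hXy, hAy, mulVec_zero]))
    · refine (card_le_card fun X hX => ?_).trans (card_filter_mulVec_eq_le hAy (D *ᵥ y))
      simp_all [mem_bipartiteBelow]

open Classical in
theorem exists_disjoint_ker_mulVecLin_sub_mul [Nonempty n]
    {A₁ A₂ : Matrix n o F} {D₁ D₂ : Matrix m o F}
    (h₁ : ∀ y, A₁ *ᵥ y = 0 → D₁ *ᵥ y = 0 → y = 0) (h₂ : ∀ y, A₂ *ᵥ y = 0 → D₂ *ᵥ y = 0 → y = 0)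
    {Y₁ Y₂ : Submodule F (o → F)} {d : ℕ} (hY₁ : finrank F Y₁ ≤ d) (hY₂ : finrank F Y₂ ≤ d)
    (hd : 2 * (Fintype.card F ^ d - 1) < (Fintype.card F - 1) * Fintype.card F ^ Fintype.card m) :
    ∃ X : Matrix m n F, Disjoint Y₁ (LinearMap.ker (D₁ - X * A₁).mulVecLin) ∧
      Disjoint Y₂ (LinearMap.ker (D₂ - X * A₂).mulVecLin) := by
  set q := Fintype.card F
  set bad₁ : Finset (Matrix m n F) := {X | ∃ y ∈ Y₁, y ≠ 0 ∧ X *ᵥ (A₁ *ᵥ y) = D₁ *ᵥ y}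
  set bad₂ : Finset (Matrix m n F) := {X | ∃ y ∈ Y₂, y ≠ 0 ∧ X *ᵥ (A₂ *ᵥ y) = D₂ *ᵥ y}
  set e := Fintype.card m * (Fintype.card n - 1)
  have hq : 0 < q := Fintype.card_pos
  have hbad {Y : Submodule F (o → F)} (hY : finrank F Y ≤ d) (s : Finset (Matrix m n F))
      (hs : #s * (q - 1) ≤ (q ^ finrank F Y - 1) * q ^ e) : #s * (q - 1) ≤ (q ^ d - 1) * q ^ e :=
    hs.trans (Nat.mul_le_mul_right _ (Nat.sub_le_sub_right (Nat.pow_le_pow_right hq hY) 1))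
  have hcard : #(bad₁ ∪ bad₂) < #(univ : Finset (Matrix m n F)) := by
    have huniv : #(univ : Finset (Matrix m n F)) = q ^ Fintype.card m * q ^ e := by
      obtain ⟨k, hk⟩ := Nat.exists_eq_add_one.mpr (Fintype.card_pos (α := n))
      rw [card_univ, ← pow_add, show Fintype.card m + e = Fintype.card n * Fintype.card m by
        simp only [e, hk, Nat.add_sub_cancel]; ring]
      exact Fintype.card_fun.trans (by rw [Fintype.card_fun, ← pow_mul])
    refine Nat.lt_of_mul_lt_mul_right (a := q - 1) ?_
    calc #(bad₁ ∪ bad₂) * (q - 1)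
        ≤ (#bad₁ + #bad₂) * (q - 1) := Nat.mul_le_mul_right _ (card_union_le _ _)
      _ ≤ 2 * (q ^ d - 1) * q ^ e := by
        have := hbad hY₁ _ (card_filter_exists_mulVec_mul_le A₁ D₁ h₁ Y₁)
        have := hbad hY₂ _ (card_filter_exists_mulVec_mul_le A₂ D₂ h₂ Y₂)
        rw [add_mul]
        nlinarith
      _ < (q - 1) * q ^ Fintype.card m * q ^ e := Nat.mul_lt_mul_of_pos_right hd (by positivity)
      _ = #(univ : Finset (Matrix m n F)) * (q - 1) := by rw [huniv]; ring
  obtain ⟨X, -, hX⟩ := exists_mem_notMem_of_card_lt_card hcard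
  simp only [bad₁, bad₂, mem_union, mem_filter, mem_univ, true_and, not_or, not_exists,
    not_and] at hX
  refine ⟨X, Submodule.disjoint_def.mpr fun y hy hXy => by_contra fun h => hX.1 y hy h ?_,
    Submodule.disjoint_def.mpr fun y hy hXy => by_contra fun h => hX.2 y hy h ?_⟩ <;>
  · rwa [LinearMap.mem_ker, mulVecLin_apply, sub_mulVec, sub_eq_zero, ← mulVec_mulVec,
      eq_comm] at hXy

end Counting

end Matrix

theorem two_mul_pow_sub_one_lt {q d t : ℕ} (hq : 2 ≤ q) (hd : d ≤ t) (h2 : q = 2 → d < t) :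
    2 * (q ^ d - 1) < (q - 1) * q ^ t := by
  have hqd : 1 ≤ q ^ d := Nat.one_le_pow _ _ (by omega)
  rcases hq.eq_or_lt with rfl | hq
  · have := (Nat.pow_le_pow_right two_pos (h2 rfl) : 2 ^ (d + 1) ≤ 2 ^ t)
    rw [pow_succ] at this
    omega
  · have := Nat.pow_le_pow_right (by omega : 0 < q) hd
    have : 2 * q ^ t ≤ (q - 1) * q ^ t := Nat.mul_le_mul_right _ (by omega)
    omega

theorem stmt_3_general {F : Type*} [Field F] [Fintype F] [DecidableEq F]
    (u v n t : ℕ) (hn : 0 < n)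
    (hnv : n ≤ v) (hsum : t + n = u + v)
    (A₁ A₂ : Matrix (Fin n) (Fin u) F) (B : Matrix (Fin n) (Fin v) F)
    (D₁ D₂ : Matrix (Fin t) (Fin u) F)
    (hBA₁ : (Matrix.of (fun i => Sum.elim (B i) (A₁ i)) :
        Matrix (Fin n) (Fin v ⊕ Fin u) F).rank = n)
    (hBA₂ : (Matrix.of (fun i => Sum.elim (B i) (A₂ i)) :
        Matrix (Fin n) (Fin v ⊕ Fin u) F).rank = n)
    (hAD₁ : (Matrix.of (Sum.elim A₁ D₁) : Matrix (Fin n ⊕ Fin t) (Fin u) F).rank = u)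
    (hAD₂ : (Matrix.of (Sum.elim A₂ D₂) : Matrix (Fin n ⊕ Fin t) (Fin u) F).rank = u)
    (hexc : ¬ (Fintype.card F = 2 ∧ n = v ∧ B.rank = n)) :
    ∃ C : Matrix (Fin t) (Fin v) F,
      (Matrix.fromBlocks B A₁ C D₁).rank = n + t ∧
      (Matrix.fromBlocks B A₂ C D₂).rank = n + t := by
  have : NeZero n := ⟨hn.ne'⟩
  have hY₁ := finrank_comap_add_card_eq_of_rank_fromCols (hBA₁.trans (Fintype.card_fin n).symm)
  have hY₂ := finrank_comap_add_card_eq_of_rank_fromCols (hBA₂.trans (Fintype.card_fin n).symm)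
  have hK := B.rank_add_finrank_ker_mulVecLin
  have hBv : B.rank ≤ v := B.rank_le_width
  have hBn : B.rank ≤ n := B.rank_le_height
  simp only [Fintype.card_fin] at hY₁ hY₂ hK
  set W := LinearMap.range B.mulVecLin
  have hq := two_mul_pow_sub_one_lt (d := u + B.rank - n) (t := t) Fintype.one_lt_card
    (by omega) fun hq => by by_contra; exact hexc ⟨hq, by omega, by omega⟩
  obtain ⟨X, hX₁, hX₂⟩ := exists_disjoint_ker_mulVecLin_sub_mul (d := u + B.rank - n)
    (eq_zero_of_rank_fromRows (hAD₁.trans (Fintype.card_fin u).symm))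
    (eq_zero_of_rank_fromRows (hAD₂.trans (Fintype.card_fin u).symm))
    (Y₁ := W.comap A₁.mulVecLin) (Y₂ := W.comap A₂.mulVecLin) (by omega) (by omega)
    (by simpa using hq)
  obtain ⟨L, hL, hL₁, hL₂⟩ := Submodule.exists_finrank_eq_disjoint_disjoint (k := v - B.rank)
    (T₁ := (W.comap A₁.mulVecLin).map (D₁ - X * A₁).mulVecLin)
    (T₂ := (W.comap A₂.mulVecLin).map (D₂ - X * A₂).mulVecLin)
    (by have := Submodule.finrank_map_le (D₁ - X * A₁).mulVecLin (W.comap A₁.mulVecLin)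
        rw [finrank_fin_fun]; omega)
    (by have := Submodule.finrank_map_le (D₂ - X * A₂).mulVecLin (W.comap A₂.mulVecLin)
        rw [finrank_fin_fun]; omega)
  obtain ⟨E, hEL, hE⟩ := LinearMap.exists_range_le_disjoint_ker
    (K := LinearMap.ker B.mulVecLin) (L := L) (by omega)
  refine ⟨X * B + LinearMap.toMatrix' E, ?_, ?_⟩
  · rw [rank_eq_card_width_of_mulVec_injective (fromBlocks_mulVec_injective hE hEL hX₁ hL₁)]
    simp only [Fintype.card_sum, Fintype.card_fin]
    omega
  · rw [rank_eq_card_width_of_mulVec_injective (fromBlocks_mulVec_injective hE hEL hX₂ hL₂)]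
    simp only [Fintype.card_sum, Fintype.card_fin]
    omega

theorem stmt_3 {F : Type*} [Field F] [Fintype F] [DecidableEq F]
    (u v n t : ℕ) (hu : 0 < u) (hv : 0 < v) (hn : 0 < n) (ht : 0 < t)
    (hnu : n ≤ u) (hnv : n ≤ v) (hsum : t + n = u + v)
    (A₁ A₂ : Matrix (Fin n) (Fin u) F) (B : Matrix (Fin n) (Fin v) F)
    (D₁ D₂ : Matrix (Fin t) (Fin u) F)
    (hBA₁ : (Matrix.of (fun i => Sum.elim (B i) (A₁ i)) :
        Matrix (Fin n) (Fin v ⊕ Fin u) F).rank = n)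
    (hBA₂ : (Matrix.of (fun i => Sum.elim (B i) (A₂ i)) :
        Matrix (Fin n) (Fin v ⊕ Fin u) F).rank = n)
    (hAD₁ : (Matrix.of (Sum.elim A₁ D₁) : Matrix (Fin n ⊕ Fin t) (Fin u) F).rank = u)
    (hAD₂ : (Matrix.of (Sum.elim A₂ D₂) : Matrix (Fin n ⊕ Fin t) (Fin u) F).rank = u)
    (hexc : ¬ (Fintype.card F = 2 ∧ n = v ∧ B.rank = n)) :
    ∃ C : Matrix (Fin t) (Fin v) F,
      (Matrix.fromBlocks B A₁ C D₁).rank = n + t ∧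
      (Matrix.fromBlocks B A₂ C D₂).rank = n + t :=
  stmt_3_general u v n t hn hnv hsum A₁ A₂ B D₁ D₂ hBA₁ hBA₂ hAD₁ hAD₂ hexc
end

section
/- Let G be a finite group and a ≥ 1. In the graph Γ_{a,a}(G) (vertices G^a, with x = (x₁,…,xₐ) adjacent to y = (y₁,…,yₐ) iff ⟨x₁,…,xₐ,y₁,…,yₐ⟩ = G, allowing loops), every edge between two distinct non-isolated vertices lies in a 3-cycle, except when a = 1 and G ≅ C₂. -/
/-!
If neither `x` nor `y` is the identity tuple, `z = x * y` (componentwise) is a common neighbour,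
since `x, x * y` and `y, x * y` generate the same subgroup as `x, y`. If `y = 1`, then `x` alone
generates `G`, and it suffices to find another generating tuple `z ∉ {x, 1}`: for `a ≥ 2` replace
one entry `x k` by `x k * x j` with `x j ≠ 1`; for `a = 1` take `x⁻¹`, which differs from `x`
unless `G` is generated by an involution, i.e. `G ≅ C₂`.
-/

open Set Subgroup

namespace Subgroup

variable {G ι : Type*} [Group G]

theorem closure_union_eq_top_of_right (s : Set G) {t : Set G} (ht : closure t = ⊤) :
    closure (s ∪ t) = ⊤ :=
  top_unique (ht ▸ closure_mono subset_union_right)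

theorem closure_range_union_range_one (x : ι → G) :
    closure (range x ∪ range (1 : ι → G)) = closure (range x) :=
  le_antisymm
    ((closure_le _).2 <| union_subset subset_closure <| range_subset_iff.2 fun _ => one_mem _)
    (closure_mono subset_union_left)

theorem closure_range_union_range_mul_left (x y : ι → G) :
    closure (range x ∪ range (x * y)) = closure (range x ∪ range y) := by
  have hx (i : ι) : x i ∈ closure (range x ∪ range y) := subset_closure (.inl ⟨i, rfl⟩)
  have hy (i : ι) : y i ∈ closure (range x ∪ range y) := subset_closure (.inr ⟨i, rfl⟩)
  refine closure_eq_of_le _ (union_subset (range_subset_iff.2 hx)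
    (range_subset_iff.2 fun i => mul_mem (hx i) (hy i))) ((closure_le _).2 ?_)
  rintro _ (⟨i, rfl⟩ | ⟨i, rfl⟩)
  · exact subset_closure (.inl ⟨i, rfl⟩)
  · rw [← inv_mul_cancel_left (x i) (y i)]
    exact mul_mem (inv_mem (subset_closure (.inl ⟨i, rfl⟩))) (subset_closure (.inr ⟨i, rfl⟩))

theorem closure_range_union_range_mul_right (x y : ι → G) :
    closure (range y ∪ range (x * y)) = closure (range x ∪ range y) := by
  have hx (i : ι) : x i ∈ closure (range x ∪ range y) := subset_closure (.inl ⟨i, rfl⟩)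
  have hy (i : ι) : y i ∈ closure (range x ∪ range y) := subset_closure (.inr ⟨i, rfl⟩)
  refine closure_eq_of_le _ (union_subset (range_subset_iff.2 hy)
    (range_subset_iff.2 fun i => mul_mem (hx i) (hy i))) ((closure_le _).2 ?_)
  rintro _ (⟨i, rfl⟩ | ⟨i, rfl⟩)
  · rw [← mul_inv_cancel_right (x i) (y i)]
    exact mul_mem (subset_closure (.inr ⟨i, rfl⟩)) (inv_mem (subset_closure (.inl ⟨i, rfl⟩)))
  · exact subset_closure (.inl ⟨i, rfl⟩)

theorem closure_range_update_mul [DecidableEq ι] {j k : ι} (hjk : j ≠ k) (x : ι → G) :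
    closure (range (Function.update x k (x k * x j))) = closure (range x) := by
  set z := Function.update x k (x k * x j)
  have hx (i : ι) : x i ∈ closure (range x) := subset_closure ⟨i, rfl⟩
  have hz (i : ι) : z i ∈ closure (range z) := subset_closure ⟨i, rfl⟩
  have hzj : z j = x j := Function.update_of_ne hjk _ _
  refine le_antisymm ((closure_le _).2 <| range_subset_iff.2 fun i => ?_)
    ((closure_le _).2 <| range_subset_iff.2 fun i => ?_)
  · rcases eq_or_ne i k with rfl | hik
    · simpa only [z, SetLike.mem_coe, Function.update_self] using mul_mem (hx i) (hx j)
    · simpa only [z, SetLike.mem_coe, Function.update_of_ne hik] using hx i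
  · rcases eq_or_ne i k with rfl | hik
    · have hxi : x i = z i * (z j)⁻¹ := by
        simp only [z, hzj, Function.update_self, mul_inv_cancel_right]
      exact hxi ▸ mul_mem (hz i) (inv_mem (hz j))
    · simpa only [z, SetLike.mem_coe, Function.update_of_ne hik] using hz i

end Subgroup

theorem Nat.card_eq_two_of_closure_singleton_eq_top {G : Type*} [Group G] {g : G} (hg : g ≠ 1)
    (hg_inv : g⁻¹ = g) (hgen : closure {g} = ⊤) : Nat.card G = 2 := by
  rw [← card_top, ← hgen, ← zpowers_eq_closure, Nat.card_zpowers]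
  exact orderOf_eq_prime (by rw [sq, ← inv_eq_iff_mul_eq_one, hg_inv]) hg

theorem Subgroup.exists_ne_ne_one_closure_range_eq_top {G ι : Type*} [Group G] {x : ι → G}
    (hx : x ≠ 1) (hgen : closure (range x) = ⊤) (hexc : Subsingleton ι → Nat.card G ≠ 2) :
    ∃ z : ι → G, z ≠ x ∧ z ≠ 1 ∧ closure (range z) = ⊤ := by
  obtain ⟨j, hj⟩ : ∃ j, x j ≠ 1 := by
    contrapose! hx
    exact funext hx
  rcases subsingleton_or_nontrivial ι with hι | hι
  · refine ⟨x⁻¹, fun hinv => hexc hι ?_, inv_ne_one.2 hx, by rwa [← inv_range', closure_inv]⟩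
    have : Nonempty ι := ⟨j⟩
    have hrange : range x = {x j} := range_eq_singleton fun i => congrArg x (Subsingleton.elim i j)
    exact Nat.card_eq_two_of_closure_singleton_eq_top hj (congrFun hinv j) (hrange ▸ hgen)
  · classical
    obtain ⟨k, hkj⟩ := exists_ne j
    refine ⟨Function.update x k (x k * x j), fun h => hj ?_, fun h => hj ?_,
      closure_range_update_mul hkj.symm x ▸ hgen⟩
    · simpa using congrFun h k
    · simpa [Function.update_of_ne hkj.symm] using congrFun h j

theorem stmt_5_general {G : Type*} [Group G]
    (a : ℕ) (ha : 1 ≤ a) (hexc : ¬ (a = 1 ∧ Nat.card G = 2))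
    (x y : Fin a → G) (hxy : x ≠ y)
    (hadj : Subgroup.closure (Set.range x ∪ Set.range y) = ⊤) :
    ∃ z : Fin a → G, z ≠ x ∧ z ≠ y ∧
      Subgroup.closure (Set.range x ∪ Set.range z) = ⊤ ∧
      Subgroup.closure (Set.range y ∪ Set.range z) = ⊤ := by
  have hexc' (h : Subsingleton (Fin a)) : Nat.card G ≠ 2 :=
    fun hG => hexc ⟨le_antisymm (Fin.subsingleton_iff_le_one.1 h) ha, hG⟩
  by_cases hy : y = 1
  · subst hy
    rw [closure_range_union_range_one] at hadj
    obtain ⟨z, hzx, hz1, hz⟩ := exists_ne_ne_one_closure_range_eq_top hxy hadj hexc'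
    exact ⟨z, hzx, hz1, closure_union_eq_top_of_right _ hz, closure_union_eq_top_of_right _ hz⟩
  by_cases hx : x = 1
  · subst hx
    rw [union_comm, closure_range_union_range_one] at hadj
    obtain ⟨z, hzy, hz1, hz⟩ := exists_ne_ne_one_closure_range_eq_top hxy.symm hadj hexc'
    exact ⟨z, hz1, hzy, closure_union_eq_top_of_right _ hz, closure_union_eq_top_of_right _ hz⟩
  refine ⟨x * y, mul_ne_left.2 hy, mul_ne_right.2 hx, ?_, ?_⟩
  · rwa [closure_range_union_range_mul_left]
  · rwa [closure_range_union_range_mul_right]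

theorem stmt_5 {G : Type*} [Group G] [Finite G] [Nontrivial G]
    (a : ℕ) (ha : 1 ≤ a) (hexc : ¬ (a = 1 ∧ Nat.card G = 2))
    (x y : Fin a → G) (hxy : x ≠ y)
    (hadj : Subgroup.closure (Set.range x ∪ Set.range y) = ⊤) :
    ∃ z : Fin a → G, z ≠ x ∧ z ≠ y ∧
      Subgroup.closure (Set.range x ∪ Set.range z) = ⊤ ∧
      Subgroup.closure (Set.range y ∪ Set.range z) = ⊤ :=
  stmt_5_general a ha hexc x y hxy hadj
end

section
/- Let G be a finite group, N a normal subgroup, and (y₁,…,y_d) a generating d-tuple of G/N where d ≥ d(G). Then there exist x₁,…,x_d ∈ G with ⟨x₁,…,x_d⟩ = G and xᵢN = yᵢ for all i (Gaschütz's lifting lemma). -/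
open Subgroup QuotientGroup Finset

section Gaschutz

variable {G : Type*} [Group G] [Fintype G] [Fintype (Subgroup G)]
  (N : Subgroup G) [N.Normal] {d : ℕ}

open scoped Classical

/-- Lifts of `y` generating exactly `H`. -/
noncomputable def PhiSet (H : Subgroup G) (y : Fin d → G ⧸ N) : Finset (Fin d → G) :=
  Finset.univ.filter fun x =>
    Subgroup.closure (Set.range x) = H ∧ ∀ i, ((x i : G) : G ⧸ N) = y i

/-- Lifts of `y` lying in `H`. -/
noncomputable def LSet (H : Subgroup G) (y : Fin d → G ⧸ N) : Finset (Fin d → G) :=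
  Finset.univ.filter fun x => ∀ i, x i ∈ H ∧ ((x i : G) : G ⧸ N) = y i

lemma mem_PhiSet {H : Subgroup G} {y : Fin d → G ⧸ N} {x : Fin d → G} :
    x ∈ PhiSet N H y ↔
      Subgroup.closure (Set.range x) = H ∧ ∀ i, ((x i : G) : G ⧸ N) = y i := by
  simp [PhiSet]

lemma mem_LSet {H : Subgroup G} {y : Fin d → G ⧸ N} {x : Fin d → G} :
    x ∈ LSet N H y ↔ ∀ i, x i ∈ H ∧ ((x i : G) : G ⧸ N) = y i := by
  simp [LSet]

lemma card_LSet (H : Subgroup G) (y : Fin d → G ⧸ N)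
    (hH : H.map (QuotientGroup.mk' N) = ⊤) :
    (LSet N H y).card = Nat.card ↥(H ⊓ N) ^ d := by
  have hcard : (LSet N H y).card =
      Nat.card {x : Fin d → G // ∀ i, x i ∈ H ∧ ((x i : G) : G ⧸ N) = y i} := by
    rw [Nat.card_eq_fintype_card, Fintype.card_subtype]
    rfl
  rw [hcard, Nat.card_congr
    (Equiv.subtypePiEquivPi (p := fun (i : Fin d) (g : G) => g ∈ H ∧ ((g : G) : G ⧸ N) = y i)),
    Nat.card_pi]
  have hfib : ∀ i : Fin d,
      Nat.card {g : G // g ∈ H ∧ ((g : G) : G ⧸ N) = y i} = Nat.card ↥(H ⊓ N) := by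
    intro i
    obtain ⟨h₀, h₀H, h₀y⟩ : ∃ h, h ∈ H ∧ ((h : G) : G ⧸ N) = y i := by
      have : y i ∈ H.map (QuotientGroup.mk' N) := hH ▸ Subgroup.mem_top _
      simpa [Subgroup.mem_map] using this
    refine Nat.card_congr ?_
    refine ⟨fun g => ⟨g.1 * h₀⁻¹, ?_⟩, fun n => ⟨n.1 * h₀, ?_, ?_⟩, ?_, ?_⟩
    · rw [Subgroup.mem_inf]
      refine ⟨H.mul_mem g.2.1 (H.inv_mem h₀H), ?_⟩
      rw [← QuotientGroup.eq_one_iff, QuotientGroup.mk_mul, QuotientGroup.mk_inv, g.2.2, h₀y,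
        mul_inv_cancel]
    · have := n.2
      rw [Subgroup.mem_inf] at this
      exact H.mul_mem this.1 h₀H
    · have := n.2
      rw [Subgroup.mem_inf] at this
      rw [QuotientGroup.mk_mul, (QuotientGroup.eq_one_iff _).2 this.2, one_mul, h₀y]
    · intro g; ext; simp
    · intro n; ext; simp
  rw [Finset.prod_congr rfl fun i _ => hfib i, Finset.prod_const, Finset.card_univ,
    Fintype.card_fin]

lemma PhiSet_subset_LSet {H K : Subgroup G} (hKH : K ≤ H) (y : Fin d → G ⧸ N) :
    PhiSet N K y ⊆ LSet N H y := by
  intro x hx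
  rw [mem_PhiSet] at hx
  rw [mem_LSet]
  intro i
  refine ⟨hKH ?_, hx.2 i⟩
  rw [← hx.1]
  exact Subgroup.subset_closure (Set.mem_range_self i)

lemma LSet_eq_biUnion (H : Subgroup G) (y : Fin d → G ⧸ N) :
    LSet N H y =
      (Finset.univ.filter (· ≤ H) : Finset (Subgroup G)).biUnion
        (fun K => PhiSet N K y) := by
  ext x
  simp only [Finset.mem_biUnion, Finset.mem_filter, Finset.mem_univ, true_and]
  constructor
  · intro hx
    rw [mem_LSet] at hx
    refine ⟨Subgroup.closure (Set.range x), ?_, ?_⟩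
    · rw [Subgroup.closure_le]
      rintro g ⟨i, rfl⟩
      exact (hx i).1
    · rw [mem_PhiSet]
      exact ⟨rfl, fun i => (hx i).2⟩
  · rintro ⟨K, hKH, hx⟩
    exact PhiSet_subset_LSet N hKH y hx

lemma card_LSet_eq_sum (H : Subgroup G) (y : Fin d → G ⧸ N) :
    (LSet N H y).card =
      ∑ K ∈ (Finset.univ.filter (· ≤ H) : Finset (Subgroup G)), (PhiSet N K y).card := by
  rw [LSet_eq_biUnion, Finset.card_biUnion]
  intro K _ K' _ hKK'
  simp only [Finset.disjoint_left]
  intro x hx hx'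
  rw [mem_PhiSet] at hx hx'
  exact hKK' (hx.1 ▸ hx'.1)

lemma PhiSet_eq_empty (H : Subgroup G) (y : Fin d → G ⧸ N)
    (hy : Subgroup.closure (Set.range y) = ⊤)
    (hH : H.map (QuotientGroup.mk' N) ≠ ⊤) : PhiSet N H y = ∅ := by
  rw [Finset.eq_empty_iff_forall_notMem]
  intro x hx
  rw [mem_PhiSet] at hx
  apply hH
  rw [← hx.1, MonoidHom.map_closure]
  have : (QuotientGroup.mk' N) '' Set.range x = Set.range y := by
    rw [← Set.range_comp]
    exact congrArg Set.range (funext fun i => hx.2 i)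
  rw [this, hy]

lemma card_PhiSet_eq (n : ℕ) (H : Subgroup G) (hn : Nat.card H ≤ n)
    (y y' : Fin d → G ⧸ N)
    (hy : Subgroup.closure (Set.range y) = ⊤)
    (hy' : Subgroup.closure (Set.range y') = ⊤) :
    (PhiSet N H y).card = (PhiSet N H y').card := by
  induction n generalizing H with
  | zero =>
    have : 0 < Nat.card H := Nat.card_pos
    omega
  | succ n ih =>
    by_cases hmap : H.map (QuotientGroup.mk' N) = ⊤
    · have hmem : H ∈ (Finset.univ.filter (· ≤ H) : Finset (Subgroup G)) := by
        simp
      have key : ∀ z : Fin d → G ⧸ N, Subgroup.closure (Set.range z) = ⊤ →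
          (PhiSet N H z).card +
            ∑ K ∈ ((Finset.univ.filter (· ≤ H) : Finset (Subgroup G)).erase H),
              (PhiSet N K z).card = Nat.card ↥(H ⊓ N) ^ d := by
        intro z hz
        have hsplit := Finset.add_sum_erase
          ((Finset.univ.filter (· ≤ H) : Finset (Subgroup G)))
          (fun K => (PhiSet N K z).card) hmem
        rw [← card_LSet N H z hmap, card_LSet_eq_sum, ← hsplit]
      have hsum : ∑ K ∈ ((Finset.univ.filter (· ≤ H) : Finset (Subgroup G)).erase H),
            (PhiSet N K y).card =
          ∑ K ∈ ((Finset.univ.filter (· ≤ H) : Finset (Subgroup G)).erase H),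
            (PhiSet N K y').card := by
        apply Finset.sum_congr rfl
        intro K hK
        rw [Finset.mem_erase, Finset.mem_filter] at hK
        have hlt : Nat.card K < Nat.card H := by
          have hss : (K : Set G) ⊂ (H : Set G) := by
            rw [Set.ssubset_iff_subset_ne]
            exact ⟨hK.2.2, fun h => hK.1 (SetLike.coe_injective h)⟩
          have := Set.ncard_lt_ncard hss (Set.toFinite _)
          rwa [← Nat.card_coe_set_eq, ← Nat.card_coe_set_eq] at this
        exact ih K (by omega)
      have h1 := key y hy
      have h2 := key y' hy'
      omega
    · rw [PhiSet_eq_empty N H y hy hmap, PhiSet_eq_empty N H y' hy' hmap]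

end Gaschutz

theorem stmt_6 {G : Type*} [Group G] [Finite G] (N : Subgroup G) [N.Normal]
    (d : ℕ) (hd : Group.rank G ≤ d) (y : Fin d → G ⧸ N)
    (hy : Subgroup.closure (Set.range y) = ⊤) :
    ∃ x : Fin d → G, Subgroup.closure (Set.range x) = ⊤ ∧
      ∀ i, (x i : G ⧸ N) = y i := by
  classical
  cases nonempty_fintype G
  haveI : Fintype (Subgroup G) := Fintype.ofFinite _
  -- build a generating d-tuple of G
  obtain ⟨S, hScard, hSgen⟩ := Group.rank_spec G
  set l : List G := S.toList ++ List.replicate (d - S.toList.length) 1 with hl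
  have hlen : l.length = d := by
    simp only [hl, List.length_append, List.length_replicate, Finset.length_toList]
    rw [hScard]
    omega
  set x₀ : Fin d → G := fun i => l.get (Fin.cast hlen.symm i) with hx₀
  have hx₀gen : Subgroup.closure (Set.range x₀) = ⊤ := by
    rw [eq_top_iff, ← hSgen]
    apply Subgroup.closure_mono
    intro s hs
    have hmem : s ∈ l := by
      rw [hl]
      exact List.mem_append_left _ (by simpa using hs)
    obtain ⟨n, hn⟩ := List.mem_iff_get.1 hmem
    exact ⟨Fin.cast hlen n, hn⟩
  set y₀ : Fin d → G ⧸ N := fun i => ((x₀ i : G) : G ⧸ N) with hy₀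
  have hy₀gen : Subgroup.closure (Set.range y₀) = ⊤ := by
    have : Set.range y₀ = (QuotientGroup.mk' N) '' Set.range x₀ := by
      rw [← Set.range_comp]; rfl
    rw [this, ← MonoidHom.map_closure, hx₀gen,
      Subgroup.map_top_of_surjective _ (QuotientGroup.mk'_surjective N)]
  have hx₀mem : x₀ ∈ PhiSet N ⊤ y₀ := by
    rw [mem_PhiSet]
    exact ⟨hx₀gen, fun i => rfl⟩
  have hcard := card_PhiSet_eq N (Nat.card (⊤ : Subgroup G)) ⊤ le_rfl y y₀ hy hy₀gen
  have hne : (PhiSet N ⊤ y).Nonempty := by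
    rw [← Finset.card_pos, hcard, Finset.card_pos]
    exact ⟨x₀, hx₀mem⟩
  obtain ⟨x, hx⟩ := hne
  rw [mem_PhiSet] at hx
  exact ⟨x, hx.1, hx.2⟩
end

section
/- Let G be a finite group and a, b non-negative integers with a + b ≥ d(G). If the graph Γ*_{a,b}(G) (obtained from Γ_{a,b}(G) by deleting isolated vertices) is connected, then Γ*_{a,b}(G/N) is connected for every normal subgroup N of G. -/
/-- The graph `Γ_{a,b}(G)` on `G^a ∪ G^b` (encoded as a sum type): two tuples of
complementary lengths are adjacent iff their combined entries generate `G`. -/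
def genGraph (G : Type*) [Group G] (a b : ℕ) :
    SimpleGraph ((Fin a → G) ⊕ (Fin b → G)) where
  Adj u v := ∃ (x : Fin a → G) (y : Fin b → G),
    ((u = Sum.inl x ∧ v = Sum.inr y) ∨ (u = Sum.inr y ∧ v = Sum.inl x)) ∧
    Subgroup.closure (Set.range x ∪ Set.range y) = ⊤
  symm := by
    constructor
    rintro u v ⟨x, y, (⟨h1, h2⟩ | ⟨h1, h2⟩), hgen⟩
    · exact ⟨x, y, Or.inr ⟨h2, h1⟩, hgen⟩
    · exact ⟨x, y, Or.inl ⟨h2, h1⟩, hgen⟩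
  loopless := by
    constructor
    rintro u ⟨x, y, (⟨h1, h2⟩ | ⟨h1, h2⟩), -⟩ <;> simp_all

/-- `Γ*_{a,b}(G)` is connected: any two non-isolated vertices of `Γ_{a,b}(G)`
are joined by a path. -/
def gammaStarConnected (G : Type*) [Group G] (a b : ℕ) : Prop :=
  ∀ u v : (Fin a → G) ⊕ (Fin b → G),
    (∃ w, (genGraph G a b).Adj u w) → (∃ w, (genGraph G a b).Adj v w) →
    (genGraph G a b).Reachable u v
/-!
The heart of the matter is Gaschütz's lemma: if `f : G →* H` is surjective, `G` is finite and
`n ≥ d(G)`, every generating `n`-tuple of `H` lifts to a generating `n`-tuple of `G`. For a subgroup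
`K` with `f(K) = H`, the lifts of `u` with entries in `K` form a coset of `(K ∩ ker f)ⁿ`, so their
number does not depend on `u`; splitting them by the subgroup they generate and inducting over
subgroups, the number of lifts generating exactly `K` is independent of the generating tuple `u`
too. Taking `K = G` and comparing with the image of a generating tuple of `G` gives a lift.

Hence every edge of `Γ_{a,b}(G/N)` lifts to an edge of `Γ_{a,b}(G)`, and since the projection
`G → G/N` induces a graph homomorphism, a path in `Γ*_{a,b}(G)` between the lifts of two
non-isolated vertices maps to a path between them.
-/

open Subgroup Function

section Gaschutz

variable {G H ι : Type*} [Group G] [Group H]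

theorem closure_image_eq_top_of_surjective {f : G →* H} (hf : Surjective f) {s : Set G}
    (hs : closure s = ⊤) : closure (f '' s) = ⊤ := by
  rw [← MonoidHom.map_closure, hs, map_top_of_surjective f hf]

theorem exists_closure_range_eq_top_of_rank_le [Group.FG G] [Finite ι]
    (hι : Group.rank G ≤ Nat.card ι) : ∃ g : ι → G, closure (Set.range g) = ⊤ := by
  classical
  obtain ⟨S, hScard, hS⟩ := Group.rank_spec G
  have := Fintype.ofFinite ι
  obtain ⟨e⟩ : Nonempty (S ↪ ι) := Embedding.nonempty_of_card_le <| by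
    rwa [Fintype.card_coe, hScard, ← Nat.card_eq_fintype_card]
  refine ⟨extend e Subtype.val 1, top_le_iff.mp (hS ▸ closure_mono ?_)⟩
  intro s hs
  exact ⟨e ⟨s, hs⟩, e.injective.extend_apply _ _ _⟩

variable (f : G →* H)

def liftsWithClosure (u : ι → H) (K : Subgroup G) : Set (ι → G) :=
  {g | f ∘ g = u ∧ closure (Set.range g) = K}

def liftsInto (u : ι → H) (K : Subgroup G) : Set (ι → G) :=
  {g | f ∘ g = u ∧ ∀ i, g i ∈ K}

theorem liftsWithClosure_eq_empty {u : ι → H} (hu : closure (Set.range u) = ⊤)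
    {K : Subgroup G} (hK : K.map f ≠ ⊤) : liftsWithClosure f u K = ∅ := by
  refine Set.eq_empty_of_forall_notMem fun g ⟨hgu, hgK⟩ => hK ?_
  rw [← hgK, MonoidHom.map_closure, ← Set.range_comp, hgu, hu]

theorem card_liftsInto_eq {K : Subgroup G} (hK : K.map f = ⊤) (u u' : ι → H) :
    Nat.card (liftsInto f u K) = Nat.card (liftsInto f u' K) := by
  have hlift : ∀ v : ι → H, (liftsInto f v K).Nonempty := by
    intro v
    choose g hgK hgv using fun i => (hK ▸ mem_top (v i) : v i ∈ K.map f)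
    exact ⟨g, funext hgv, hgK⟩
  obtain ⟨g₀, hg₀u, hg₀K⟩ := hlift u
  obtain ⟨g₁, hg₁u, hg₁K⟩ := hlift u'
  refine Nat.card_congr (Equiv.subtypeEquiv (Equiv.mulRight (g₀⁻¹ * g₁)) fun g => ?_)
  simp only [liftsInto, Set.mem_ofPred_eq, Equiv.coe_mulRight, funext_iff, comp_apply,
    Pi.mul_apply, Pi.inv_apply, map_mul, map_inv, ← hg₀u, ← hg₁u, ← mul_assoc, mul_eq_right,
    mul_inv_eq_one, mul_mem_cancel_right, inv_mem_iff, hg₀K, hg₁K]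

def liftsIntoEquivSigma (u : ι → H) (K : Subgroup G) :
    liftsInto f u K ≃ Σ K' : {K' : Subgroup G // K' ≤ K}, liftsWithClosure f u K' where
  toFun g := ⟨⟨closure (Set.range g.1), (closure_le _).mpr (Set.range_subset_iff.mpr g.2.2)⟩,
    ⟨g.1, g.2.1, rfl⟩⟩
  invFun p :=
    ⟨p.2.1, p.2.2.1, fun i => p.1.2 (p.2.2.2.le (subset_closure (Set.mem_range_self i)))⟩
  left_inv _ := rfl
  right_inv p := Sigma.subtype_ext (Subtype.ext p.2.2.2) rfl

theorem card_liftsWithClosure_eq [Finite G] [Finite ι] {u u' : ι → H}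
    (hu : closure (Set.range u) = ⊤) (hu' : closure (Set.range u') = ⊤) (K : Subgroup G) :
    Nat.card (liftsWithClosure f u K) = Nat.card (liftsWithClosure f u' K) := by
  classical
  induction K using WellFoundedLT.induction with
  | ind K ih =>
    by_cases hK : K.map f ≠ ⊤
    · rw [liftsWithClosure_eq_empty f hu hK, liftsWithClosure_eq_empty f hu' hK]
    have := Fintype.ofFinite {K' : Subgroup G // K' ≤ K}
    have hsum := card_liftsInto_eq f (not_not.mp hK) u u'
    have hKmem : (⟨K, le_rfl⟩ : {K' : Subgroup G // K' ≤ K}) ∈ Finset.univ := Finset.mem_univ _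
    rw [Nat.card_congr (liftsIntoEquivSigma f u K), Nat.card_congr (liftsIntoEquivSigma f u' K),
      Nat.card_sigma, Nat.card_sigma, ← Finset.add_sum_erase _ _ hKmem,
      ← Finset.add_sum_erase _ _ hKmem] at hsum
    rw [Finset.sum_congr rfl fun (K' : {K' : Subgroup G // K' ≤ K}) hK' =>
      ih K' (lt_of_le_of_ne K'.2 fun h => (Finset.mem_erase.mp hK').1 (Subtype.ext h))] at hsum
    exact Nat.add_right_cancel hsum

theorem exists_lift_closure_eq_top [Finite G] [Finite ι] (hf : Surjective f)
    (hι : Group.rank G ≤ Nat.card ι) {u : ι → H} (hu : closure (Set.range u) = ⊤) :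
    ∃ g : ι → G, f ∘ g = u ∧ closure (Set.range g) = ⊤ := by
  obtain ⟨g₀, hg₀⟩ := exists_closure_range_eq_top_of_rank_le hι
  have hfg₀ : closure (Set.range (f ∘ g₀)) = ⊤ := by
    rw [Set.range_comp]; exact closure_image_eq_top_of_surjective hf hg₀
  have hpos : 0 < Nat.card (liftsWithClosure f (f ∘ g₀) ⊤) :=
    Nat.card_pos_iff.mpr ⟨⟨g₀, rfl, hg₀⟩, inferInstance⟩
  rw [← card_liftsWithClosure_eq f hu hfg₀] at hpos
  obtain ⟨⟨g, hg⟩⟩ := (Nat.card_pos_iff.mp hpos).1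
  exact ⟨g, hg⟩

end Gaschutz

section GenGraph

variable {G H : Type*} [Group G] [Group H] {a b : ℕ}

def genGraphHom {f : G →* H} (hf : Surjective f) (a b : ℕ) :
    genGraph G a b →g genGraph H a b where
  toFun := Sum.map (f ∘ ·) (f ∘ ·)
  map_rel' := by
    rintro u v ⟨x, y, hxy, hgen⟩
    refine ⟨f ∘ x, f ∘ y, ?_, ?_⟩
    · rcases hxy with ⟨rfl, rfl⟩ | ⟨rfl, rfl⟩ <;> simp
    · rw [Set.range_comp, Set.range_comp, ← Set.image_union]
      exact closure_image_eq_top_of_surjective hf hgen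

theorem exists_genGraph_adj_lift [Finite G] {f : G →* H} (hf : Surjective f)
    (hab : Group.rank G ≤ a + b) {u v : (Fin a → H) ⊕ (Fin b → H)}
    (huv : (genGraph H a b).Adj u v) :
    ∃ U V, (genGraph G a b).Adj U V ∧ genGraphHom hf a b U = u ∧ genGraphHom hf a b V = v := by
  obtain ⟨x, y, hxy, hgen⟩ := huv
  obtain ⟨g, hgxy, hg⟩ := exists_lift_closure_eq_top f hf (ι := Fin a ⊕ Fin b)
    (by simpa using hab) (u := Sum.elim x y) (by rwa [Set.Sum.elim_range])
  have hadj : (genGraph G a b).Adj (.inl (g ∘ .inl)) (.inr (g ∘ .inr)) :=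
    ⟨_, _, .inl ⟨rfl, rfl⟩, by rwa [← Set.Sum.elim_range, Sum.elim_comp_inl_inr]⟩
  have hx : genGraphHom hf a b (.inl (g ∘ .inl)) = .inl x :=
    congrArg (Sum.inl ∘ (· ∘ Sum.inl)) hgxy
  have hy : genGraphHom hf a b (.inr (g ∘ .inr)) = .inr y :=
    congrArg (Sum.inr ∘ (· ∘ Sum.inr)) hgxy
  rcases hxy with ⟨rfl, rfl⟩ | ⟨rfl, rfl⟩
  · exact ⟨_, _, hadj, hx, hy⟩
  · exact ⟨_, _, hadj.symm, hy, hx⟩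

end GenGraph

theorem stmt_7 {G : Type*} [Group G] [Finite G] (a b : ℕ)
    (hab : Group.rank G ≤ a + b)
    (h : gammaStarConnected G a b)
    (N : Subgroup G) [N.Normal] :
    gammaStarConnected (G ⧸ N) a b := by
  rintro u v ⟨u', huu'⟩ ⟨v', hvv'⟩
  have hf := QuotientGroup.mk'_surjective N
  obtain ⟨U, U', hUU', rfl, -⟩ := exists_genGraph_adj_lift hf hab huu'
  obtain ⟨V, V', hVV', rfl, -⟩ := exists_genGraph_adj_lift hf hab hvv'
  exact (h U V ⟨U', hUU'⟩ ⟨V', hVV'⟩).map (genGraphHom hf a b)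
end

section
/- Let G be a finite group with a + b ≥ d(G). If the swap graph Σ_{a+b}(G) (vertices are generating (a+b)-tuples, adjacent iff they differ in exactly one entry) is connected, then the graph Γ*_{a,b}(G) is connected. -/
/-- The swap graph `Σ_d(G)` on ordered generating `d`-tuples of `G`: two tuples
are adjacent iff they differ in exactly one entry. -/
def swapGraph (G : Type*) [Group G] (d : ℕ) :
    SimpleGraph {x : Fin d → G // Subgroup.closure (Set.range x) = ⊤} where
  Adj u v := u ≠ v ∧ ∃ i, ∀ j, j ≠ i → u.1 j = v.1 j
  symm := by
    constructor
    rintro u v ⟨hne, i, h⟩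
    exact ⟨hne.symm, i, fun j hj => (h j hj).symm⟩
  loopless := by constructor; rintro u ⟨hne, -⟩; exact hne rfl

/-!
A generating `(a+b)`-tuple `z` splits as `z = (x, y)` with `x ∈ G^a`, `y ∈ G^b` adjacent in
`Γ_{a,b}(G)`; send `z` to the vertex `x`. Changing an entry of `y` does not move `x`, while changing
an entry of `x` keeps `y` and moves `x` to `x'` along the path `x — y — x'`. So paths in
`Σ_{a+b}(G)` map to walks in `Γ_{a,b}(G)`, and every non-isolated vertex lies on an edge `x — y`
coming from the generating tuple `z = (x, y)`.
-/

namespace Fin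

theorem range_append {α : Type*} {m n : ℕ} (x : Fin m → α) (y : Fin n → α) :
    Set.range (append x y) = Set.range x ∪ Set.range y := by
  ext g
  constructor
  · rintro ⟨i, rfl⟩
    induction i using addCases <;> simp
  · rintro (⟨i, rfl⟩ | ⟨j, rfl⟩)
    · exact ⟨castAdd n i, append_left x y i⟩
    · exact ⟨natAdd m j, append_right x y j⟩

end Fin

section

variable {G : Type*} [Group G] {a b : ℕ}

theorem genGraph_adj_inl_inr {x : Fin a → G} {y : Fin b → G}
    (hxy : Subgroup.closure (Set.range (Fin.append x y)) = ⊤) :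
    (genGraph G a b).Adj (Sum.inl x) (Sum.inr y) :=
  ⟨x, y, Or.inl ⟨rfl, rfl⟩, Fin.range_append x y ▸ hxy⟩

def headVertex (a b : ℕ) (z : Fin (a + b) → G) : (Fin a → G) ⊕ (Fin b → G) :=
  Sum.inl fun i => z (Fin.castAdd b i)

theorem genGraph_reachable_headVertex_of_swapGraph_adj
    {z z' : {x : Fin (a + b) → G // Subgroup.closure (Set.range x) = ⊤}}
    (hzz' : (swapGraph G (a + b)).Adj z z') :
    (genGraph G a b).Reachable (headVertex a b z.1) (headVertex a b z'.1) := by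
  obtain ⟨-, i, hi⟩ := hzz'
  have hz := z.2
  have hz' := z'.2
  rw [← Fin.append_castAdd_natAdd (f := z.1)] at hz
  rw [← Fin.append_castAdd_natAdd (f := z'.1)] at hz'
  induction i using Fin.addCases with
  | left k =>
    have htail : (fun j => z.1 (Fin.natAdd a j)) = fun j => z'.1 (Fin.natAdd a j) :=
      funext fun j => hi _ fun h => by simp only [Fin.ext_iff, Fin.val_natAdd, Fin.val_castAdd] at h; omega
    rw [htail] at hz
    exact (genGraph_adj_inl_inr hz).reachable.trans (genGraph_adj_inl_inr hz').symm.reachable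
  | right k =>
    have hhead : (fun j => z.1 (Fin.castAdd b j)) = fun j => z'.1 (Fin.castAdd b j) :=
      funext fun j => hi _ fun h => by simp only [Fin.ext_iff, Fin.val_natAdd, Fin.val_castAdd] at h; omega
    rw [headVertex, headVertex, hhead]

theorem genGraph_reachable_headVertex_of_swapGraph_reachable
    {z z' : {x : Fin (a + b) → G // Subgroup.closure (Set.range x) = ⊤}}
    (hzz' : (swapGraph G (a + b)).Reachable z z') :
    (genGraph G a b).Reachable (headVertex a b z.1) (headVertex a b z'.1) := by
  obtain ⟨w⟩ := hzz'
  induction w with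
  | nil => rfl
  | cons h _ ih => exact (genGraph_reachable_headVertex_of_swapGraph_adj h).trans ih

theorem exists_genGraph_reachable_headVertex {u : (Fin a → G) ⊕ (Fin b → G)}
    (hu : ∃ w, (genGraph G a b).Adj u w) :
    ∃ z : {x : Fin (a + b) → G // Subgroup.closure (Set.range x) = ⊤},
      (genGraph G a b).Reachable u (headVertex a b z.1) := by
  obtain ⟨_, x, y, hu, hxy⟩ := hu
  rw [← Fin.range_append] at hxy
  have hhead : headVertex a b (Fin.append x y) = Sum.inl x := by
    simp [headVertex]
  refine ⟨⟨Fin.append x y, hxy⟩, hhead ▸ ?_⟩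
  rcases hu with ⟨rfl, -⟩ | ⟨rfl, -⟩
  · rfl
  · exact (genGraph_adj_inl_inr hxy).symm.reachable

end

theorem stmt_8_general {G : Type*} [Group G] (a b : ℕ)
    (h : (swapGraph G (a + b)).Connected) :
    gammaStarConnected G a b := by
  intro u v hu hv
  obtain ⟨z, hz⟩ := exists_genGraph_reachable_headVertex hu
  obtain ⟨z', hz'⟩ := exists_genGraph_reachable_headVertex hv
  exact hz.trans <|
    (genGraph_reachable_headVertex_of_swapGraph_reachable (h.preconnected z z')).trans hz'.symm

theorem stmt_8 {G : Type*} [Group G] [Finite G] (a b : ℕ)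
    (hab : Group.rank G ≤ a + b)
    (h : (swapGraph G (a + b)).Connected) :
    gammaStarConnected G a b :=
  stmt_8_general a b h
end

section
/- Let α = (a₁,…,a_r) and β = (b₁,…,b_s) be two non-decreasing sequences of prime numbers. If ∏ᵢ (1 − 1/aᵢ) = ∏ⱼ (1 − 1/bⱼ), then r = s and aᵢ = bᵢ for all i. -/
/-!
Clearing denominators turns `∏ (1 - 1/aᵢ) = ∏ (1 - 1/bⱼ)` into
`∏ (aᵢ - 1) * ∏ bⱼ = ∏ (bⱼ - 1) * ∏ aᵢ` in `ℕ`. If `q` is the largest prime occurring in either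
sequence, it divides no `p - 1` with `p ≤ q`, so comparing `q`-adic valuations shows that `q`
occurs equally often in both sequences, hence in both. Cancelling a factor `1 - 1/q` and
inducting, the two multisets of primes agree, and sorted lists with equal multisets are equal.
-/

open Multiset

theorem Nat.factorization_multiset_prod_of_prime {s : Multiset ℕ} (hs : ∀ p ∈ s, p.Prime)
    (q : ℕ) : s.prod.factorization q = s.count q := by
  rw [← Nat.primeFactorsList_count_eq, ← coe_count, ← Nat.factors_eq,
    UniqueFactorizationMonoid.normalizedFactors_prod_of_prime fun p hp => (hs p hp).prime]

theorem Nat.not_dvd_multiset_prod_map_sub_one {s : Multiset ℕ} {q : ℕ} (hq : q.Prime)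
    (hs : ∀ p ∈ s, 1 < p ∧ p ≤ q) : ¬q ∣ (s.map (· - 1)).prod := by
  intro hdvd
  obtain ⟨p, hp, hqp⟩ := hq.prime.exists_mem_multiset_map_dvd hdvd
  obtain ⟨hp_one, hpq⟩ := hs p hp
  have := Nat.le_of_dvd (by omega) hqp
  omega

theorem Multiset.count_eq_of_prod_map_sub_one_mul_prod_eq {s t : Multiset ℕ}
    (hs : ∀ p ∈ s, p.Prime) (ht : ∀ p ∈ t, p.Prime) {q : ℕ} (hq : q.Prime)
    (hqs : ∀ p ∈ s, p ≤ q) (hqt : ∀ p ∈ t, p ≤ q)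
    (h : (s.map (· - 1)).prod * t.prod = (t.map (· - 1)).prod * s.prod) :
    s.count q = t.count q := by
  have hs' := Nat.not_dvd_multiset_prod_map_sub_one hq fun p hp => ⟨(hs p hp).one_lt, hqs p hp⟩
  have ht' := Nat.not_dvd_multiset_prod_map_sub_one hq fun p hp => ⟨(ht p hp).one_lt, hqt p hp⟩
  have hnum : ∀ {n : ℕ}, ¬q ∣ n → n ≠ 0 := by rintro n hn rfl; exact hn (dvd_zero q)
  have hq_val := congrArg (Nat.factorization · q) h
  simp only [Nat.factorization_mul (hnum hs') (prod_ne_zero fun h0 => Nat.not_prime_zero (ht 0 h0)),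
    Nat.factorization_mul (hnum ht') (prod_ne_zero fun h0 => Nat.not_prime_zero (hs 0 h0)),
    Finsupp.add_apply, Nat.factorization_eq_zero_of_not_dvd hs',
    Nat.factorization_eq_zero_of_not_dvd ht', Nat.factorization_multiset_prod_of_prime hs,
    Nat.factorization_multiset_prod_of_prime ht, zero_add] at hq_val
  exact hq_val.symm

section Field

variable {K : Type*} [Field K] [CharZero K]

theorem Multiset.prod_map_one_sub_one_div {s : Multiset ℕ} (hs : ∀ p ∈ s, 0 < p) :
    (s.map fun p : ℕ => 1 - 1 / (p : K)).prod =
      (((s.map (· - 1)).prod : ℕ) : K) / ((s.prod : ℕ) : K) := by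
  rw [Nat.cast_multiset_prod, Nat.cast_multiset_prod, map_map, ← prod_map_div]
  refine congrArg _ (map_congr rfl fun p hp => ?_)
  have hp0 : (p : K) ≠ 0 := Nat.cast_ne_zero.mpr (hs p hp).ne'
  simp [Nat.cast_sub (hs p hp), sub_div, hp0]

theorem Multiset.prod_map_sub_one_mul_prod_eq_of_prod_map_one_sub_one_div_eq
    {s t : Multiset ℕ} (hs : ∀ p ∈ s, p.Prime) (ht : ∀ p ∈ t, p.Prime)
    (h : (s.map fun p : ℕ => 1 - 1 / (p : K)).prod =
      (t.map fun p : ℕ => 1 - 1 / (p : K)).prod) :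
    (s.map (· - 1)).prod * t.prod = (t.map (· - 1)).prod * s.prod := by
  rw [prod_map_one_sub_one_div fun p hp => (hs p hp).pos,
    prod_map_one_sub_one_div fun p hp => (ht p hp).pos, div_eq_div_iff] at h
  · exact_mod_cast h
  · exact Nat.cast_ne_zero.mpr (prod_ne_zero fun h0 => Nat.not_prime_zero (hs 0 h0))
  · exact Nat.cast_ne_zero.mpr (prod_ne_zero fun h0 => Nat.not_prime_zero (ht 0 h0))

theorem Multiset.eq_of_prod_map_one_sub_one_div_eq {s t : Multiset ℕ}
    (hs : ∀ p ∈ s, p.Prime) (ht : ∀ p ∈ t, p.Prime)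
    (h : (s.map fun p : ℕ => 1 - 1 / (p : K)).prod =
      (t.map fun p : ℕ => 1 - 1 / (p : K)).prod) :
    s = t := by
  induction s using strongInductionOn generalizing t with
  | ih s ih =>
  rcases eq_or_ne (s + t) 0 with hst | hst
  · rw [add_eq_zero] at hst
    rw [hst.1, hst.2]
  obtain ⟨q, hq, hq_max⟩ := (s + t).toFinset.exists_max_image id (toFinset_nonempty.mpr hst)
  have hq_mem_add := mem_toFinset.mp hq
  have hq_prime : q.Prime := (mem_add.mp hq_mem_add).elim (hs q) (ht q)
  have hqs : ∀ p ∈ s, p ≤ q := fun p hp => hq_max p (mem_toFinset.mpr (mem_add.mpr (.inl hp)))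
  have hqt : ∀ p ∈ t, p ≤ q := fun p hp => hq_max p (mem_toFinset.mpr (mem_add.mpr (.inr hp)))
  have hcount := count_eq_of_prod_map_sub_one_mul_prod_eq hs ht hq_prime hqs hqt
    (prod_map_sub_one_mul_prod_eq_of_prod_map_one_sub_one_div_eq hs ht h)
  have hq_mem : q ∈ s ∧ q ∈ t := by
    have hq_pos : 0 < count q (s + t) := count_pos.mpr hq_mem_add
    rw [count_add] at hq_pos
    exact ⟨count_pos.mp (by omega), count_pos.mp (by omega)⟩
  rw [← cons_erase hq_mem.1, ← cons_erase hq_mem.2] at h ⊢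
  simp only [map_cons, prod_cons] at h
  have hfq : (1 - 1 / (q : K)) ≠ 0 := by
    rw [sub_ne_zero, ne_comm, one_div, inv_ne_one]
    exact_mod_cast hq_prime.one_lt.ne'
  rw [ih _ (erase_lt.mpr hq_mem.1) (fun p hp => hs p (mem_of_mem_erase hp))
    (fun p hp => ht p (mem_of_mem_erase hp)) (mul_left_cancel₀ hfq h)]

end Field

theorem stmt_10 (a b : List ℕ)
    (ha : ∀ p ∈ a, p.Prime) (hb : ∀ p ∈ b, p.Prime)
    (hasort : a.Pairwise (· ≤ ·)) (hbsort : b.Pairwise (· ≤ ·))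
    (h : (a.map (fun p => 1 - 1 / (p : ℚ))).prod =
         (b.map (fun p => 1 - 1 / (p : ℚ))).prod) :
    a = b := by
  refine List.Perm.eq_of_pairwise' hasort hbsort (coe_eq_coe.mp ?_)
  refine eq_of_prod_map_one_sub_one_div_eq (K := ℚ) ha hb ?_
  -- In `h` the binder is `p : ℚ`, so `a` and `b` were coerced to `List ℚ` through the list monad.
  simpa only [List.pure_def, List.bind_eq_flatMap, ← List.map_eq_flatMap, List.map_map,
    Function.comp_def, map_coe, prod_coe] using h
end

section
/- Let G be a finite group, a + b > d(G), and let V_a and V_b be the two parts of the bipartite graph Γ*_{a,b}(G), i.e. the sets of non-isolated vertices among G^a and G^b respectively. If 0 < a < b, then |V_a| < |V_b|. -/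
/-!
Extending `x ∈ V_a` by the first `b - a` entries of a witness `y ∈ G^b` gives an element of `V_b`,
witnessed by the remaining `a` entries of `y`; so restricting elements of `V_b` to their first `a`
coordinates hits all of `V_a`. This restriction is not injective: since `d(G) ≤ a + b - 1`, a
generating set fits into all coordinates but the last one of the `b`-tuple, which can then take any
value of the nontrivial group `G`.
-/

open Function Subgroup

namespace Group

variable {G : Type*} [Group G]

section Rank

variable [FG G] {ι : Type*} [Finite ι]

theorem exists_closure_range_eq_top_of_rank_le (h : rank G ≤ Nat.card ι) :
    ∃ w : ι → G, closure (Set.range w) = ⊤ := by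
  have := Fintype.ofFinite ι
  obtain ⟨S, hS, hclosure⟩ := rank_spec G
  obtain ⟨e⟩ := Embedding.nonempty_of_card_le (α := S) (β := ι)
    (by simpa [Nat.card_eq_fintype_card, hS] using h)
  refine ⟨extend e Subtype.val 1, eq_top_iff.2 (hclosure ▸ Subgroup.closure_mono ?_)⟩
  intro s hs
  exact ⟨e ⟨s, hs⟩, e.injective.extend_apply _ _ _⟩

theorem exists_closure_range_update_eq_top_of_rank_lt [DecidableEq ι]
    (h : rank G < Nat.card ι) (i₀ : ι) :
    ∃ w : ι → G, ∀ g, closure (Set.range (update w i₀ g)) = ⊤ := by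
  have := Fintype.ofFinite ι
  rw [Nat.card_eq_fintype_card] at h
  obtain ⟨w, hw⟩ := exists_closure_range_eq_top_of_rank_le (G := G) (ι := {i // i ≠ i₀})
    (by simp [Nat.card_eq_fintype_card, Fintype.card_subtype_compl]; omega)
  refine ⟨fun i => if hi : i = i₀ then 1 else w ⟨i, hi⟩, fun g => eq_top_iff.2 ?_⟩
  rw [← hw]
  refine Subgroup.closure_mono ?_
  rintro _ ⟨⟨i, hi⟩, rfl⟩
  exact ⟨i, by simp [hi]⟩

end Rank

variable (G) in
/-- The part `V_a` of `Γ*_{a,b}(G)` for `a = |ι|`, `b = |κ|`. -/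
def nonIsolatedTuples (ι κ : Type*) : Set (ι → G) :=
  {x | ∃ y : κ → G, closure (Set.range x ∪ Set.range y) = ⊤}

variable {ι κ α γ δ : Type*}

theorem mem_nonIsolatedTuples_iff_sumElim {x : ι → G} :
    x ∈ nonIsolatedTuples G ι κ ↔ ∃ y : κ → G, closure (Set.range (Sum.elim x y)) = ⊤ := by
  simp only [nonIsolatedTuples, Set.mem_ofPred_eq, Set.Sum.elim_range]

theorem nonIsolatedTuples_congr_right {κ' : Type*} (e : κ ≃ κ') :
    nonIsolatedTuples G ι κ = nonIsolatedTuples G ι κ' := by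
  ext x
  refine ⟨fun ⟨y, hy⟩ => ⟨y ∘ e.symm, ?_⟩, fun ⟨y, hy⟩ => ⟨y ∘ e, ?_⟩⟩ <;>
    rwa [EquivLike.range_comp]

theorem card_nonIsolatedTuples_congr_left {ι' : Type*} (e : ι ≃ ι') :
    Nat.card (nonIsolatedTuples G ι κ) = Nat.card (nonIsolatedTuples G ι' κ) :=
  Nat.card_congr <| (e.arrowCongr (Equiv.refl G)).subtypeEquiv fun x => by
    simp only [nonIsolatedTuples, Set.mem_ofPred_eq]
    rw [show Set.range (e.arrowCongr (.refl G) x) = Set.range x from EquivLike.range_comp x e.symm]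

theorem nonIsolatedTuples_subset_image_comp_inl :
    nonIsolatedTuples G α (γ ⊕ δ) ⊆ (· ∘ Sum.inl) '' nonIsolatedTuples G (α ⊕ γ) δ := by
  rintro x ⟨y, hy⟩
  refine ⟨Sum.elim x (y ∘ Sum.inl), ⟨y ∘ Sum.inr, ?_⟩, Sum.elim_comp_inl _ _⟩
  rwa [Set.Sum.elim_range, Set.union_assoc, ← Set.Sum.elim_range, Sum.elim_comp_inl_inr]

theorem not_injOn_comp_inl_nonIsolatedTuples [FG G] [Nontrivial G] [Finite α] [Finite γ]
    [Finite δ] (c : γ) (h : rank G < Nat.card ((α ⊕ γ) ⊕ δ)) :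
    ¬Set.InjOn (· ∘ Sum.inl) (nonIsolatedTuples G (α ⊕ γ) δ) := by
  classical
  set i₀ : (α ⊕ γ) ⊕ δ := .inl (.inr c)
  obtain ⟨w, hw⟩ := exists_closure_range_update_eq_top_of_rank_lt h i₀
  obtain ⟨g, hg⟩ := exists_ne (1 : G)
  have hmem (g : G) : update w i₀ g ∘ Sum.inl ∈ nonIsolatedTuples G (α ⊕ γ) δ :=
    mem_nonIsolatedTuples_iff_sumElim.2 ⟨_, by rw [Sum.elim_comp_inl_inr]; exact hw g⟩
  intro hinj
  have h1g := congrFun (hinj (hmem 1) (hmem g) (funext fun i => by simp [i₀])) (.inr c)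
  exact hg (by simpa [i₀] using h1g.symm)

theorem card_nonIsolatedTuples_lt [Finite G] [Nontrivial G] [Finite α] [Finite γ] [Finite δ]
    (c : γ) (h : rank G < Nat.card ((α ⊕ γ) ⊕ δ)) :
    Nat.card (nonIsolatedTuples G α (γ ⊕ δ)) < Nat.card (nonIsolatedTuples G (α ⊕ γ) δ) := by
  simp only [Nat.card_coe_set_eq]
  calc _ ≤ ((· ∘ Sum.inl) '' nonIsolatedTuples G (α ⊕ γ) δ).ncard :=
        Set.ncard_le_ncard nonIsolatedTuples_subset_image_comp_inl
    _ < _ := (Set.ncard_image_le).lt_of_ne <| mt (Set.ncard_image_iff).1 <|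
        not_injOn_comp_inl_nonIsolatedTuples c h

end Group

theorem stmt_11_general {G : Type*} [Group G] [Finite G] [Nontrivial G]
    (a b : ℕ) (hab : a < b) (hd : Group.rank G < a + b) :
    Nat.card {x : Fin a → G //
        ∃ y : Fin b → G, Subgroup.closure (Set.range x ∪ Set.range y) = ⊤} <
    Nat.card {y : Fin b → G //
        ∃ x : Fin a → G, Subgroup.closure (Set.range x ∪ Set.range y) = ⊤} := by
  have hb : a + (b - a) = b := by omega
  have hsplit : Fin a ⊕ Fin (b - a) ≃ Fin b := finSumFinEquiv.trans (finCongr hb)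
  calc Nat.card (Group.nonIsolatedTuples G (Fin a) (Fin b))
      = Nat.card (Group.nonIsolatedTuples G (Fin a) (Fin (b - a) ⊕ Fin a)) := by
        rw [Group.nonIsolatedTuples_congr_right ((Equiv.sumComm _ _).trans hsplit)]
    _ < Nat.card (Group.nonIsolatedTuples G (Fin a ⊕ Fin (b - a)) (Fin a)) :=
        Group.card_nonIsolatedTuples_lt ⟨0, by omega⟩ (by simp; omega)
    _ = Nat.card (Group.nonIsolatedTuples G (Fin b) (Fin a)) :=
        Group.card_nonIsolatedTuples_congr_left hsplit
    _ = _ := Nat.card_congr <| Equiv.subtypeEquivRight fun y =>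
        exists_congr fun x => by rw [Set.union_comm]

theorem stmt_11 {G : Type*} [Group G] [Finite G] [Nontrivial G]
    (a b : ℕ) (ha : 0 < a) (hab : a < b) (hd : Group.rank G < a + b) :
    Nat.card {x : Fin a → G //
        ∃ y : Fin b → G, Subgroup.closure (Set.range x ∪ Set.range y) = ⊤} <
    Nat.card {y : Fin b → G //
        ∃ x : Fin a → G, Subgroup.closure (Set.range x ∪ Set.range y) = ⊤} :=
  stmt_11_general a b hab hd
end

section
/- Let G be a finite group, let a ≥ 2, and let x = (x₁,…,xₐ) be a vertex of a connected component Γ of Γ*_{a,a}(G) containing a 3-cycle, such that x is adjacent to every other vertex of Γ. If G is not cyclic, then ⟨x₁,…,xₐ⟩ = G (i.e., there is a loop at x). -/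
/-- Adjacency in the graph `Γ_{a,a}(G)` on `G^a` (loops allowed): two `a`-tuples
are adjacent iff their combined `2a` entries generate `G`. -/
def squareAdj {G : Type*} [Group G] {a : ℕ} (x y : Fin a → G) : Prop :=
  Subgroup.closure (Set.range x ∪ Set.range y) = ⊤

theorem stmt_12 {G : Type*} [Group G] [Finite G] (hnc : ¬ IsCyclic G)
    (a : ℕ) (ha : 2 ≤ a) (x : Fin a → G)
    (hiso : ∃ y, squareAdj x y)
    (h3 : ∃ u v w : Fin a → G, u ≠ v ∧ v ≠ w ∧ u ≠ w ∧
      squareAdj u v ∧ squareAdj v w ∧ squareAdj u w ∧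
      Relation.ReflTransGen (squareAdj (G := G) (a := a)) x u)
    (hall : ∀ y : Fin a → G, y ≠ x →
      Relation.ReflTransGen (squareAdj (G := G) (a := a)) x y → squareAdj x y) :
    Subgroup.closure (Set.range x) = ⊤ := by
  obtain ⟨y, hxy⟩ := hiso
  have hsym : ∀ u v : Fin a → G, squareAdj u v → squareAdj v u := by
    intro u v h
    rw [squareAdj, Set.union_comm]
    exact h
  by_cases hconst : ∀ i j : Fin a, x i = x j
  · exfalso
    have h0 : (0 : ℕ) < a := by omega
    have h1 : (1 : ℕ) < a := by omega
    set i0 : Fin a := ⟨0, h0⟩ with hi0def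
    set i1 : Fin a := ⟨1, h1⟩ with hi1def
    have hi01 : i1 ≠ i0 := by
      simp [hi0def, hi1def, Fin.ext_iff]
    set c := x i0 with hcdef
    have hrange : Set.range x = {c} := by
      ext g
      constructor
      · rintro ⟨i, rfl⟩
        exact hconst i i0
      · rintro rfl
        exact ⟨i0, rfl⟩
    have key : ∀ g : G, g ≠ c → Subgroup.closure {c, g} = ⊤ := by
      intro g hg
      set z := Function.update x i0 g with hzdef
      have hcz : c ∈ Set.range z := by
        refine ⟨i1, ?_⟩
        rw [hzdef, Function.update_of_ne hi01]
        exact hconst i1 i0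
      have hzy : squareAdj z y := by
        rw [squareAdj, eq_top_iff, ← hxy]
        apply Subgroup.closure_mono
        rw [hrange]
        rintro t (rfl | ht)
        · exact Or.inl hcz
        · exact Or.inr ht
      have hpath : Relation.ReflTransGen (squareAdj (G := G) (a := a)) x z :=
        (Relation.ReflTransGen.single hxy).tail (hsym z y hzy)
      have hzx : z ≠ x := by
        intro h
        apply hg
        have := congrFun h i0
        rw [hzdef, Function.update_self] at this
        exact this
      have hfin := hall z hzx hpath
      rw [squareAdj] at hfin
      rw [eq_top_iff, ← hfin]
      apply Subgroup.closure_le _ |>.mpr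
      rintro t (ht | ht)
      · rw [hrange] at ht
        rcases ht with rfl
        exact Subgroup.subset_closure (Or.inl rfl)
      · obtain ⟨i, rfl⟩ := ht
        by_cases hii : i = i0
        · subst hii
          rw [hzdef, Function.update_self]
          exact Subgroup.subset_closure (Or.inr rfl)
        · rw [hzdef, Function.update_of_ne hii]
          have : x i = c := hconst i i0
          rw [this]
          exact Subgroup.subset_closure (Or.inl rfl)
    have hcyc : IsCyclic G := by
      by_cases hc : c = 1
      · have hnt : Nontrivial G := by
          by_contra h
          rw [not_nontrivial_iff_subsingleton] at h
          exact hnc isCyclic_of_subsingleton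
        obtain ⟨g, hg⟩ := exists_ne (1 : G)
        have h2 := key g (by rw [hc]; exact hg)
        refine ⟨⟨g, fun t => ?_⟩⟩
        show t ∈ Subgroup.zpowers g
        rw [Subgroup.zpowers_eq_closure]
        have : Subgroup.closure {g} = ⊤ := by
          rw [eq_top_iff, ← h2]
          apply Subgroup.closure_le _ |>.mpr
          rintro s (rfl | rfl)
          · rw [hc]; exact Subgroup.one_mem _
          · exact Subgroup.subset_closure rfl
        rw [this]; trivial
      · have h2 := key 1 (fun h => hc h.symm)
        refine ⟨⟨c, fun t => ?_⟩⟩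
        show t ∈ Subgroup.zpowers c
        rw [Subgroup.zpowers_eq_closure]
        have : Subgroup.closure {c} = ⊤ := by
          rw [eq_top_iff, ← h2]
          apply Subgroup.closure_le _ |>.mpr
          rintro s (rfl | rfl)
          · exact Subgroup.subset_closure rfl
          · exact Subgroup.one_mem _
        rw [this]; trivial
    exact hnc hcyc
  · push_neg at hconst
    obtain ⟨i, j, hij⟩ := hconst
    set x' := x ∘ (Equiv.swap i j) with hx'def
    have hr : Set.range x' = Set.range x := (Equiv.swap i j).surjective.range_comp x
    have hne : x' ≠ x := by
      intro h
      apply hij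
      have := congrFun h i
      rw [hx'def] at this
      simp only [Function.comp_apply, Equiv.swap_apply_left] at this
      exact this.symm
    have hyx' : squareAdj y x' := by
      rw [squareAdj, hr, Set.union_comm]
      exact hxy
    have hpath : Relation.ReflTransGen (squareAdj (G := G) (a := a)) x x' :=
      (Relation.ReflTransGen.single hxy).tail hyx'
    have h := hall x' hne hpath
    rw [squareAdj, hr, Set.union_self] at h
    exact h
end

section
/- Let G be a finite group with d(G) = 2 such that in the generating graph Γ(G) (vertices are elements of G, x adjacent to y iff ⟨x,y⟩ = G) there is a non-isolated vertex x adjacent to every other non-isolated vertex of its connected component, with no loop at x (i.e. ⟨x⟩ ≠ G). Then G is isomorphic to C₂ × C₂ or to the dihedral group D_p of order 2p for some odd prime p. -/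
open Subgroup

private lemma cpair_le {G : Type*} [Group G] {a b : G} {H : Subgroup G}
    (ha : a ∈ H) (hb : b ∈ H) : Subgroup.closure ({a, b} : Set G) ≤ H :=
  (Subgroup.closure_le H).mpr (Set.insert_subset_iff.mpr ⟨ha, Set.singleton_subset_iff.mpr hb⟩)

private lemma mem_cpair_left {G : Type*} [Group G] (a b : G) :
    a ∈ Subgroup.closure ({a, b} : Set G) :=
  Subgroup.subset_closure (Set.mem_insert _ _)

private lemma mem_cpair_right {G : Type*} [Group G] (a b : G) :
    b ∈ Subgroup.closure ({a, b} : Set G) :=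
  Subgroup.subset_closure (Set.mem_insert_of_mem _ rfl)

private lemma cpair_top {G : Type*} [Group G] {a b c d : G}
    (h : Subgroup.closure ({a, b} : Set G) = ⊤)
    (ha : a ∈ Subgroup.closure ({c, d} : Set G))
    (hb : b ∈ Subgroup.closure ({c, d} : Set G)) :
    Subgroup.closure ({c, d} : Set G) = ⊤ :=
  eq_top_iff.mpr (h ▸ cpair_le ha hb)

private lemma conj_invol {G : Type*} [Group G] {x a : G} (hx : x * x = 1)
    (h : x * a * x = a⁻¹) (m : ℤ) : x * a ^ m * x = a ^ (-m) := by
  have hxi : x⁻¹ = x := inv_eq_of_mul_eq_one_right hx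
  have h1 : (x * a * x⁻¹) ^ m = x * a ^ m * x⁻¹ := conj_zpow
  rw [hxi] at h1
  rw [← h1, h, inv_zpow, zpow_neg]

private lemma pow_mod_two {G : Type*} [Group G] {a : G} (ha : a * a = 1) (m : ℕ) :
    a ^ (m % 2) = a ^ m := by
  have h2 : a ^ 2 = 1 := by rw [pow_two]; exact ha
  conv_rhs => rw [← Nat.div_add_mod m 2]
  rw [pow_add, pow_mul, h2, one_pow, one_mul]

private lemma dihedral_iso {G : Type*} [Group G] (x ρ : G) (n : ℕ) (hn2 : 2 ≤ n)
    (hord : orderOf ρ = n) (hx : x * x = 1) (hconj : x * ρ * x = ρ⁻¹)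
    (htop : Subgroup.closure ({x, ρ} : Set G) = ⊤) (hxρ : x ∉ Subgroup.zpowers ρ) :
    Nonempty (G ≃* DihedralGroup n) := by
  haveI : NeZero n := ⟨by omega⟩
  haveI : Fact (1 < n) := ⟨by omega⟩
  set f : ZMod n → G := fun i => ρ ^ i.val with hf
  have hfadd : ∀ i j : ZMod n, f (i + j) = f i * f j := by
    intro i j
    show ρ ^ (i + j).val = ρ ^ i.val * ρ ^ j.val
    rw [← pow_add, ZMod.val_add]
    have h := pow_mod_orderOf ρ (i.val + j.val)
    rw [hord] at h
    exact h
  have hf0 : f 0 = 1 := by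
    show ρ ^ (0 : ZMod n).val = 1
    rw [ZMod.val_zero, pow_zero]
  have hfneg : ∀ i : ZMod n, f (-i) = (f i)⁻¹ := by
    intro i
    have h1 : f i * f (-i) = 1 := by rw [← hfadd, add_neg_cancel, hf0]
    exact (inv_eq_of_mul_eq_one_right h1).symm
  have hxinv : x⁻¹ = x := inv_eq_of_mul_eq_one_right hx
  have hxf : ∀ i : ZMod n, x * f i = f (-i) * x := by
    intro i
    have h1 : x * ρ ^ ((i.val : ℤ)) * x = ρ ^ (-(i.val : ℤ)) := conj_invol hx hconj _
    have h2 : x * f i * x = (f i)⁻¹ := by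
      show x * ρ ^ i.val * x = (ρ ^ i.val)⁻¹
      rw [← zpow_natCast ρ i.val, h1, zpow_neg]
    rw [hfneg]
    calc x * f i = (x * f i * x) * x⁻¹ := by group
    _ = (f i)⁻¹ * x := by rw [h2, hxinv]
  have hfx : ∀ i : ZMod n, f i * x = x * f (-i) := by
    intro i
    have h1 := hxf (-i)
    rw [neg_neg] at h1
    exact h1.symm
  let Φ : DihedralGroup n →* G := {
    toFun := fun g => match g with
      | DihedralGroup.r i => f i
      | DihedralGroup.sr i => x * f i
    map_one' := by rw [DihedralGroup.one_def]; exact hf0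
    map_mul' := by
      rintro (i | i) (j | j)
      · rw [DihedralGroup.r_mul_r]
        exact hfadd i j
      · rw [DihedralGroup.r_mul_sr]
        show x * f (j - i) = f i * (x * f j)
        rw [← mul_assoc, hfx, mul_assoc, ← hfadd, neg_add_eq_sub]
      · rw [DihedralGroup.sr_mul_r]
        show x * f (i + j) = (x * f i) * f j
        rw [mul_assoc, hfadd]
      · rw [DihedralGroup.sr_mul_sr]
        show f (j - i) = (x * f i) * (x * f j)
        have h1 : (x * f i) * (x * f j) = x * (f i * x) * f j := by group
        rw [h1, hfx, ← mul_assoc, hx, one_mul, ← hfadd, neg_add_eq_sub]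
  }
  have hΦr : Φ (DihedralGroup.r 1) = ρ := by
    show f 1 = ρ
    show ρ ^ (1 : ZMod n).val = ρ
    rw [ZMod.val_one, pow_one]
  have hΦs : Φ (DihedralGroup.sr 0) = x := by
    show x * f 0 = x
    rw [hf0, mul_one]
  have hsurj : Function.Surjective Φ := by
    rw [← MonoidHom.range_eq_top]
    refine eq_top_iff.mpr (htop ▸ cpair_le ?_ ?_)
    · exact ⟨DihedralGroup.sr 0, hΦs⟩
    · exact ⟨DihedralGroup.r 1, hΦr⟩
  have hinj : Function.Injective Φ := by
    rw [injective_iff_map_eq_one]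
    rintro (i | i) h
    · have h1 : ρ ^ i.val = 1 := h
      have hdvd : orderOf ρ ∣ i.val := orderOf_dvd_of_pow_eq_one h1
      rw [hord] at hdvd
      have h0 : i = 0 :=
        (ZMod.val_eq_zero i).mp (Nat.eq_zero_of_dvd_of_lt hdvd (ZMod.val_lt i))
      rw [h0, ← DihedralGroup.one_def]
    · exfalso
      have h1 : x * ρ ^ i.val = 1 := h
      apply hxρ
      have h2 : x = (ρ ^ i.val)⁻¹ := by
        rw [eq_inv_iff_mul_eq_one]
        exact h1
      rw [h2]
      exact inv_mem (Subgroup.npow_mem_zpowers ρ i.val)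
  exact ⟨(MulEquiv.ofBijective Φ ⟨hinj, hsurj⟩).symm⟩

private lemma klein_iso {G : Type*} [Group G] (x ρ : G) (hx : x * x = 1) (hρ : ρ * ρ = 1)
    (hcomm : x * ρ = ρ * x) (htop : Subgroup.closure ({x, ρ} : Set G) = ⊤)
    (hxρ : x ∉ Subgroup.zpowers ρ) (hρ1 : ρ ≠ 1) :
    Nonempty (G ≃* Multiplicative (ZMod 2 × ZMod 2)) := by
  have hC : Commute x ρ := hcomm
  have hcpow : ∀ m k : ℕ, x ^ m * ρ ^ k = ρ ^ k * x ^ m := fun m k => (hC.pow_pow m k).eq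
  let f : Multiplicative (ZMod 2 × ZMod 2) →* G := {
    toFun := fun g => x ^ (Multiplicative.toAdd g).1.val * ρ ^ (Multiplicative.toAdd g).2.val
    map_one' := by simp
    map_mul' := by
      intro g h
      show x ^ ((Multiplicative.toAdd g).1 + (Multiplicative.toAdd h).1).val *
          ρ ^ ((Multiplicative.toAdd g).2 + (Multiplicative.toAdd h).2).val = _
      rw [ZMod.val_add, ZMod.val_add, pow_mod_two hx, pow_mod_two hρ, pow_add, pow_add]
      rw [mul_assoc, ← mul_assoc (x ^ (Multiplicative.toAdd h).1.val), hcpow]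
      group
  }
  have hfx : f (Multiplicative.ofAdd (1, 0)) = x := by
    show x ^ (1 : ZMod 2).val * ρ ^ (0 : ZMod 2).val = x
    simp [ZMod.val_one]
  have hfρ : f (Multiplicative.ofAdd (0, 1)) = ρ := by
    show x ^ (0 : ZMod 2).val * ρ ^ (1 : ZMod 2).val = ρ
    simp [ZMod.val_one]
  have hsurj : Function.Surjective f := by
    rw [← MonoidHom.range_eq_top]
    refine eq_top_iff.mpr (htop ▸ cpair_le ?_ ?_)
    · exact ⟨_, hfx⟩
    · exact ⟨_, hfρ⟩
  have hinj : Function.Injective f := by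
    rw [injective_iff_map_eq_one]
    intro a ha
    have hcase : ∀ v : ZMod 2, v = 0 ∨ v = 1 := by decide
    have ha' : x ^ (Multiplicative.toAdd a).1.val * ρ ^ (Multiplicative.toAdd a).2.val = 1 := ha
    have hgoal : (Multiplicative.toAdd a) = 0 := by
      rcases hcase (Multiplicative.toAdd a).1 with h1 | h1 <;>
        rcases hcase (Multiplicative.toAdd a).2 with h2 | h2
      · exact Prod.ext h1 h2
      · rw [h1, h2] at ha'
        simp [ZMod.val_one] at ha'
        exact (hρ1 ha').elim
      · rw [h1, h2] at ha'
        simp [ZMod.val_one] at ha'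
        exact (hxρ (by rw [ha']; exact one_mem _)).elim
      · rw [h1, h2] at ha'
        simp [ZMod.val_one] at ha'
        refine (hxρ ?_).elim
        rw [show x = ρ⁻¹ from eq_inv_of_mul_eq_one_left ha']
        exact inv_mem (Subgroup.mem_zpowers ρ)
    have := congrArg Multiplicative.ofAdd hgoal
    simpa using this
  exact ⟨(MulEquiv.ofBijective f ⟨hinj, hsurj⟩).symm⟩

/-- Adjacency in the generating graph of `G`: `x ~ y` iff `⟨x, y⟩ = G`. -/
def genAdj {G : Type*} [Group G] (x y : G) : Prop :=
  Subgroup.closure ({x, y} : Set G) = ⊤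

theorem stmt_13 {G : Type*} [Group G] [Finite G] (hnc : ¬ IsCyclic G)
    (hrank : Group.rank G = 2) (x : G)
    (hiso : ∃ y, genAdj x y)
    (hloop : Subgroup.closure ({x} : Set G) ≠ ⊤)
    (h3 : ∃ u v w : G, u ≠ v ∧ v ≠ w ∧ u ≠ w ∧
      genAdj u v ∧ genAdj v w ∧ genAdj u w ∧
      Relation.ReflTransGen (genAdj (G := G)) x u)
    (hall : ∀ y : G, y ≠ x → (∃ z, genAdj y z) →
      Relation.ReflTransGen (genAdj (G := G)) x y → genAdj x y) :
    Nonempty (G ≃* Multiplicative (ZMod 2 × ZMod 2)) ∨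
    ∃ p : ℕ, p.Prime ∧ Odd p ∧ Nonempty (G ≃* DihedralGroup p) := by
  classical
  obtain ⟨y0, hxy0⟩ := hiso
  have hxy0' : Subgroup.closure ({x, y0} : Set G) = ⊤ := hxy0
  have hcyc : ∀ a b c : G, Subgroup.closure ({a, b} : Set G) = ⊤ →
      a ∈ Subgroup.zpowers c → b ∈ Subgroup.zpowers c → False := by
    intro a b c htop ha hb
    have hle : (⊤ : Subgroup G) ≤ Subgroup.zpowers c := htop ▸ cpair_le ha hb
    exact hnc ⟨⟨c, fun g => hle (Subgroup.mem_top g)⟩⟩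
  -- Step 1 : x is an involution
  have hxinv : x⁻¹ = x := by
    by_contra hne
    have hmx : x ∈ Subgroup.closure ({x⁻¹, y0} : Set G) := by
      have h := inv_mem (mem_cpair_left x⁻¹ y0)
      rwa [inv_inv] at h
    have h1 : genAdj x⁻¹ y0 := cpair_top hxy0' hmx (mem_cpair_right _ _)
    have h2 : genAdj y0 x⁻¹ := by
      show Subgroup.closure ({y0, x⁻¹} : Set G) = ⊤
      rw [Set.pair_comm]
      exact h1
    have hpath : Relation.ReflTransGen (genAdj (G := G)) x x⁻¹ :=
      Relation.ReflTransGen.tail (Relation.ReflTransGen.single hxy0) h2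
    have h3' : Subgroup.closure ({x, x⁻¹} : Set G) = ⊤ := hall x⁻¹ hne ⟨y0, h1⟩ hpath
    exact hloop (eq_top_iff.mpr (h3' ▸ cpair_le (subset_closure (Set.mem_singleton x))
      (inv_mem (subset_closure (Set.mem_singleton x)))))
  have hxx : x * x = 1 := mul_eq_one_iff_eq_inv.mpr hxinv.symm
  -- Step 2 : find an involution b with ⟨x, b⟩ = G
  have key : ∀ m : ℕ, ∀ y : G, orderOf y = m → Subgroup.closure ({x, y} : Set G) = ⊤ →
      ∃ b : G, b * b = 1 ∧ Subgroup.closure ({x, b} : Set G) = ⊤ := by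
    intro m
    induction m using Nat.strong_induction_on with
    | _ m ih =>
      intro y hm hxy
      by_cases hcj : y⁻¹ * x * y = x
      · by_cases hy2 : y * y = 1
        · exact ⟨y, hy2, hxy⟩
        · have hcomm : x * y = y * x := by
            have h := congrArg (fun g => y * g) hcj
            simpa [mul_assoc] using h
          rcases Nat.even_or_odd m with he | ho
          · -- descend to y * y
            have hmpos : 0 < m := hm ▸ orderOf_pos y
            have hz : genAdj (y * y * x) y := by
              show Subgroup.closure ({y * y * x, y} : Set G) = ⊤
              refine cpair_top hxy ?_ (mem_cpair_right _ _)
              have h1 := mem_cpair_left (y * y * x) y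
              have h2 := mem_cpair_right (y * y * x) y
              have h3' : x = y⁻¹ * (y⁻¹ * (y * y * x)) := by group
              have hmem := mul_mem (inv_mem h2) (mul_mem (inv_mem h2) h1)
              rwa [← h3'] at hmem
            have hzy : genAdj y (y * y * x) := by
              show Subgroup.closure ({y, y * y * x} : Set G) = ⊤
              rw [Set.pair_comm]
              exact hz
            have hz_ne : y * y * x ≠ x := by
              intro h
              apply hy2
              have h' : y * y * x = 1 * x := by rw [h, one_mul]
              exact mul_right_cancel h'
            have hpath : Relation.ReflTransGen (genAdj (G := G)) x (y * y * x) :=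
              Relation.ReflTransGen.tail
                (Relation.ReflTransGen.single (show genAdj x y from hxy)) hzy
            have hA : Subgroup.closure ({x, y * y * x} : Set G) = ⊤ :=
              hall (y * y * x) hz_ne ⟨y, hz⟩ hpath
            have hB : Subgroup.closure ({x, y * y} : Set G) = ⊤ := by
              refine cpair_top hA (mem_cpair_left _ _) ?_
              exact mul_mem (mem_cpair_right _ _) (mem_cpair_left _ _)
            have hord2 : orderOf (y * y) = m / 2 := by
              rw [← pow_two, orderOf_pow, hm, Nat.gcd_comm,
                Nat.gcd_eq_left (even_iff_two_dvd.mp he)]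
            exact ih (m / 2) (Nat.div_lt_self hmpos one_lt_two) (y * y) hord2 hB
          · -- odd order : contradiction with non-cyclicity
            exfalso
            have hc : Commute x y := hcomm
            have hym : y ^ m = 1 := by rw [← hm]; exact pow_orderOf_eq_one y
            have hxym : (x * y) ^ m = x := by
              rw [hc.mul_pow, hym, mul_one, ← pow_mod_two hxx m, Nat.odd_iff.mp ho, pow_one]
            have hx_mem : x ∈ Subgroup.zpowers (x * y) := by
              have hmem := Subgroup.npow_mem_zpowers (x * y) m
              rwa [hxym] at hmem
            have hy_mem : y ∈ Subgroup.zpowers (x * y) := by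
              have h5 : y = x⁻¹ * (x * y) := by group
              have hmem := mul_mem (inv_mem hx_mem) (Subgroup.mem_zpowers (x * y))
              rwa [← h5] at hmem
            exact hcyc x y (x * y) hxy hx_mem hy_mem
      · -- x is not centralized by y : conjugate involution
        have hbb : (y⁻¹ * x * y) * (y⁻¹ * x * y) = 1 := by
          have h1 : (y⁻¹ * x * y) * (y⁻¹ * x * y) = y⁻¹ * (x * x) * y := by group
          rw [h1, hxx, mul_one, inv_mul_cancel]
        have hby : genAdj (y⁻¹ * x * y) y := by
          show Subgroup.closure ({y⁻¹ * x * y, y} : Set G) = ⊤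
          refine cpair_top hxy ?_ (mem_cpair_right _ _)
          have h1 := mem_cpair_left (y⁻¹ * x * y) y
          have h2 := mem_cpair_right (y⁻¹ * x * y) y
          have h3' : x = y * (y⁻¹ * x * y) * y⁻¹ := by group
          have hmem := mul_mem (mul_mem h2 h1) (inv_mem h2)
          rwa [← h3'] at hmem
        have hyb : genAdj y (y⁻¹ * x * y) := by
          show Subgroup.closure ({y, y⁻¹ * x * y} : Set G) = ⊤
          rw [Set.pair_comm]
          exact hby
        have hpath : Relation.ReflTransGen (genAdj (G := G)) x (y⁻¹ * x * y) :=
          Relation.ReflTransGen.tail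
            (Relation.ReflTransGen.single (show genAdj x y from hxy)) hyb
        exact ⟨y⁻¹ * x * y, hbb, hall (y⁻¹ * x * y) hcj ⟨y, hby⟩ hpath⟩
  obtain ⟨b, hbb, hxb⟩ := key (orderOf y0) y0 rfl hxy0'
  have hbinv : b⁻¹ = b := inv_eq_of_mul_eq_one_right hbb
  -- Step 3 : the rotation r and its basic properties
  have hr1 : x * b ≠ 1 := by
    intro h
    have hbx : b = x := by
      have h1 : b = x⁻¹ := eq_inv_of_mul_eq_one_right h
      rw [h1, hxinv]
    apply hloop
    refine eq_top_iff.mpr (hxb ▸ cpair_le (subset_closure (Set.mem_singleton x)) ?_)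
    rw [hbx]
    exact subset_closure (Set.mem_singleton x)
  set r : G := x * b with hr
  have hxr_top : Subgroup.closure ({x, r} : Set G) = ⊤ := by
    refine cpair_top hxb (mem_cpair_left _ _) ?_
    have h1 : b = x⁻¹ * r := by rw [hr]; group
    rw [h1]
    exact mul_mem (inv_mem (mem_cpair_left _ _)) (mem_cpair_right _ _)
  have hconj : x * r * x = r⁻¹ := by
    rw [hr, mul_inv_rev, hbinv, hxinv]
    calc x * (x * b) * x = (x * x) * (b * x) := by group
    _ = b * x := by rw [hxx, one_mul]
  have hx_not : x ∉ Subgroup.zpowers r := fun h =>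
    hcyc x r r hxr_top h (Subgroup.mem_zpowers r)
  set n := orderOf r with hn
  have hnpos : 0 < n := orderOf_pos r
  have hn1 : n ≠ 1 := by
    intro h
    apply hr1
    apply orderOf_eq_one_iff.mp
    rw [← hn]
    exact h
  have hn2 : 2 ≤ n := by omega
  have hconjz : ∀ m : ℤ, x * r ^ m * x = r ^ (-m) := conj_invol hxx hconj
  -- the chain x, x*r, x*r², …
  have hchain : ∀ j : ℕ, genAdj (x * r ^ j) (x * r ^ (j + 1)) := by
    intro j
    show Subgroup.closure ({x * r ^ j, x * r ^ (j + 1)} : Set G) = ⊤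
    have h1 := mem_cpair_left (x * r ^ j) (x * r ^ (j + 1))
    have h2 := mem_cpair_right (x * r ^ j) (x * r ^ (j + 1))
    have hrmem : r ∈ Subgroup.closure ({x * r ^ j, x * r ^ (j + 1)} : Set G) := by
      have h3' : r = (x * r ^ j)⁻¹ * (x * r ^ (j + 1)) := by rw [pow_succ]; group
      have hmem := mul_mem (inv_mem h1) h2
      rwa [← h3'] at hmem
    have hxmem : x ∈ Subgroup.closure ({x * r ^ j, x * r ^ (j + 1)} : Set G) := by
      have h4 : x = (x * r ^ j) * (r ^ j)⁻¹ := by group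
      have hmem := mul_mem h1 (inv_mem (pow_mem hrmem j))
      rwa [← h4] at hmem
    exact cpair_top hxr_top hxmem hrmem
  have hpath : ∀ j : ℕ, Relation.ReflTransGen (genAdj (G := G)) x (x * r ^ j) := by
    intro j
    induction j with
    | zero =>
      rw [pow_zero, mul_one]
    | succ k ihk => exact Relation.ReflTransGen.tail ihk (hchain k)
  -- every nontrivial power of r generates ⟨r⟩
  have hgen_pow : ∀ k : ℕ, 0 < k → k < n → r ∈ Subgroup.zpowers (r ^ k) := by
    intro k hk0 hkn
    have hrk1 : r ^ k ≠ 1 := by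
      intro h
      have hdvd := orderOf_dvd_of_pow_eq_one h
      rw [← hn] at hdvd
      have := Nat.le_of_dvd hk0 hdvd
      omega
    have hne : x * r ^ k ≠ x := by
      intro h
      apply hrk1
      have h' : x * r ^ k = x * 1 := by rw [h, mul_one]
      exact mul_left_cancel h'
    have hA : Subgroup.closure ({x, x * r ^ k} : Set G) = ⊤ :=
      hall (x * r ^ k) hne ⟨x * r ^ (k + 1), hchain k⟩ (hpath k)
    have hB : Subgroup.closure ({x, r ^ k} : Set G) = ⊤ := by
      refine cpair_top hA (mem_cpair_left _ _) ?_
      exact mul_mem (mem_cpair_left _ _) (mem_cpair_right _ _)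
    have h5 : x * (r ^ k) * x = (r ^ k)⁻¹ := by
      have h6 := hconjz (k : ℤ)
      rw [zpow_natCast] at h6
      rw [h6, ← zpow_natCast r k, zpow_neg]
    have hconjk : ∀ m : ℤ, x * (r ^ k) ^ m * x = (r ^ k) ^ (-m) := conj_invol hxx h5
    have hswap : ∀ m : ℤ, x * (r ^ k) ^ m = (r ^ k) ^ (-m) * x := by
      intro m
      have h6 := hconjk m
      calc x * (r ^ k) ^ m = (x * (r ^ k) ^ m * x) * x⁻¹ := by group
      _ = (r ^ k) ^ (-m) * x := by rw [h6, hxinv]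
    have hswap' : ∀ m : ℤ, (r ^ k) ^ m * x = x * (r ^ k) ^ (-m) := by
      intro m
      have h6 := hswap (-m)
      rw [neg_neg] at h6
      exact h6.symm
    let K : Subgroup G := {
      carrier := {g | ∃ m : ℤ, g = (r ^ k) ^ m ∨ g = x * (r ^ k) ^ m}
      one_mem' := ⟨0, Or.inl (zpow_zero _).symm⟩
      mul_mem' := by
        rintro g h ⟨a, (rfl | rfl)⟩ ⟨c, (rfl | rfl)⟩
        · exact ⟨a + c, Or.inl (zpow_add _ _ _).symm⟩
        · refine ⟨c - a, Or.inr ?_⟩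
          rw [← mul_assoc, hswap' a, mul_assoc, ← zpow_add, neg_add_eq_sub]
        · refine ⟨a + c, Or.inr ?_⟩
          rw [mul_assoc, ← zpow_add]
        · refine ⟨c - a, Or.inl ?_⟩
          have h7 : (x * (r ^ k) ^ a) * (x * (r ^ k) ^ c) = x * ((r ^ k) ^ a * x) * (r ^ k) ^ c := by
            group
          rw [h7, hswap' a, ← mul_assoc, hxx, one_mul, ← zpow_add, neg_add_eq_sub]
      inv_mem' := by
        rintro g ⟨a, (rfl | rfl)⟩
        · exact ⟨-a, Or.inl (zpow_neg _ _).symm⟩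
        · refine ⟨a, Or.inr ?_⟩
          rw [mul_inv_rev, hxinv, ← zpow_neg]
          have h6 := hswap' (-a)
          rw [neg_neg] at h6
          exact h6
    }
    have hxK : x ∈ K := ⟨0, Or.inr (by rw [zpow_zero, mul_one])⟩
    have hρK : r ^ k ∈ K := ⟨1, Or.inl (zpow_one _).symm⟩
    have hrK : r ∈ K := (hB ▸ cpair_le hxK hρK : (⊤ : Subgroup G) ≤ K) (Subgroup.mem_top r)
    rcases hrK with ⟨m, hm | hm⟩
    · exact ⟨m, hm.symm⟩
    · exfalso
      apply hx_not
      have h8 : x = r * ((r ^ k) ^ m)⁻¹ := eq_mul_inv_of_mul_eq hm.symm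
      have hmem := mul_mem (Subgroup.mem_zpowers r)
        (inv_mem (zpow_mem (pow_mem (Subgroup.mem_zpowers r) k) m))
      rwa [← h8] at hmem
  -- n is prime
  have hp : n.Prime := by
    rw [Nat.prime_def_lt]
    refine ⟨hn2, ?_⟩
    intro d hdlt hddvd
    have hd0 : d ≠ 0 := by
      rintro rfl
      rw [Nat.zero_dvd] at hddvd
      omega
    obtain ⟨m, hm⟩ := Subgroup.mem_zpowers_iff.mp (hgen_pow d (Nat.pos_of_ne_zero hd0) hdlt)
    rw [← zpow_natCast r d] at hm
    have h1 : r ^ ((d : ℤ) * m - 1) = 1 := by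
      rw [zpow_sub, zpow_one, zpow_mul, hm, mul_inv_cancel]
    have h2 : (n : ℤ) ∣ (d : ℤ) * m - 1 := by
      rw [hn]
      exact orderOf_dvd_iff_zpow_eq_one.mpr h1
    have hd_n : (d : ℤ) ∣ (n : ℤ) := Int.natCast_dvd_natCast.mpr hddvd
    have h3' : (d : ℤ) ∣ 1 := by
      have h4 : (d : ℤ) ∣ (d : ℤ) * m - ((d : ℤ) * m - 1) :=
        dvd_sub (dvd_mul_right _ _) (hd_n.trans h2)
      simpa using h4
    have h5 : d ∣ 1 := by exact_mod_cast h3'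
    exact Nat.dvd_one.mp h5
  -- conclusion
  rcases hp.eq_two_or_odd' with h2eq | hodd
  · left
    have hr2 : r * r = 1 := by
      have h6 := pow_orderOf_eq_one r
      rw [← hn, h2eq, pow_two] at h6
      exact h6
    have hcomm : x * r = r * x := by
      have hrr : r⁻¹ = r := inv_eq_of_mul_eq_one_right hr2
      have h4 : x * r * x = r := by rw [hconj, hrr]
      calc x * r = (x * r * x) * x⁻¹ := by group
      _ = r * x := by rw [h4, hxinv]
    exact klein_iso x r hxx hr2 hcomm hxr_top hx_not hr1
  · right
    exact ⟨n, hp, hodd, dihedral_iso x r n hn2 hn.symm hxx hconj hxr_top hx_not⟩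
end

section
/- Let S be a finite non-abelian simple group, d ≥ 2, and τ = τ_d(S) the number of Aut(S)-orbits on generating d-tuples of S. If (x₁,…,x_d) and (y₁,…,y_d) are both generating d-tuples of S^τ, then there exists k ∈ Aut(S^τ) with yᵢ = xᵢ^k for all i. -/
/-- The orbit relation of `Aut S` on generating `d`-tuples of `S`. -/
def autOrbitRel (S : Type*) [Group S] (d : ℕ) :
    {x : Fin d → S // Subgroup.closure (Set.range x) = ⊤} →
    {x : Fin d → S // Subgroup.closure (Set.range x) = ⊤} → Prop :=
  fun x y => ∃ φ : MulAut S, ∀ i, φ (x.1 i) = y.1 i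

/-- `τ_d(S)`: the number of `Aut S`-orbits on ordered generating `d`-tuples of `S`. -/
noncomputable def tauInv (S : Type*) [Group S] (d : ℕ) : ℕ :=
  Nat.card (Quot (autOrbitRel S d))

lemma autOrbitRel_equivalence (S : Type*) [Group S] (d : ℕ) :
    Equivalence (autOrbitRel S d) := by
  constructor
  · intro a; exact ⟨1, fun i => rfl⟩
  · rintro a b ⟨φ, h⟩
    exact ⟨φ.symm, fun i => by rw [← h i, MulEquiv.symm_apply_apply]⟩
  · rintro a b c ⟨φ, h⟩ ⟨ψ, h'⟩
    exact ⟨φ.trans ψ, fun i => by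
      simp only [MulEquiv.trans_apply, h i, h' i]⟩

lemma col_gen {S : Type*} [Group S] {n d : ℕ} {x : Fin d → (Fin n → S)}
    (hx : Subgroup.closure (Set.range x) = ⊤) (j : Fin n) :
    Subgroup.closure (Set.range fun i => x i j) = ⊤ := by
  set f := Pi.evalMonoidHom (fun _ : Fin n => S) j with hf
  have hsurj : Function.Surjective f := fun s => ⟨fun _ => s, rfl⟩
  have h1 : (Subgroup.closure (Set.range x)).map f
      = Subgroup.closure (f '' Set.range x) :=
    (MonoidHom.map_closure f _)
  have h2 : f '' Set.range x = Set.range fun i => x i j := by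
    rw [← Set.range_comp]; rfl
  rw [hx, Subgroup.map_top_of_surjective f hsurj, h2] at h1
  exact h1.symm

lemma col_inj {S : Type*} [Group S] [Nontrivial S] {n d : ℕ} {x : Fin d → (Fin n → S)}
    (hx : Subgroup.closure (Set.range x) = ⊤) {a b : Fin n}
    (φ : MulAut S) (h : ∀ i, φ (x i a) = x i b) : a = b := by
  by_contra hab
  let H : Subgroup (Fin n → S) :=
  { carrier := {g | φ (g a) = g b}
    one_mem' := by simp
    mul_mem' := by
      intro g g' hg hg'
      simp only [Set.mem_setOf_eq, Pi.mul_apply, map_mul] at *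
      rw [hg, hg']
    inv_mem' := by
      intro g hg
      simp only [Set.mem_setOf_eq, Pi.inv_apply, map_inv] at *
      rw [hg] }
  have hle : Subgroup.closure (Set.range x) ≤ H :=
    (Subgroup.closure_le H).mpr (by rintro _ ⟨i, rfl⟩; exact h i)
  rw [hx] at hle
  have hall : ∀ g : Fin n → S, φ (g a) = g b := fun g => hle (Subgroup.mem_top g)
  obtain ⟨s, hs⟩ := exists_ne (1 : S)
  have hthis := hall (Pi.mulSingle a s)
  have h2 : (Pi.mulSingle a s : Fin n → S) b = 1 := by
    rw [Pi.mulSingle_eq_of_ne (show b ≠ a from fun hba => hab hba.symm)]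
  rw [h2] at hthis
  simp only [Pi.mulSingle_eq_same] at hthis
  exact hs (by simpa using φ.injective (by simpa using hthis))

/-- Coordinate-permutation automorphism of a direct power. -/
def permMulAut {S : Type*} [Group S] {n : ℕ} (σ : Equiv.Perm (Fin n)) :
    MulAut (Fin n → S) where
  toFun g := g ∘ σ
  invFun g := g ∘ σ.symm
  left_inv g := by funext j; simp
  right_inv g := by funext j; simp
  map_mul' g h := rfl

theorem stmt_14 {S : Type*} [Group S] [Finite S] [IsSimpleGroup S]
    (hna : ∃ x y : S, x * y ≠ y * x) (d : ℕ) (hd : 2 ≤ d)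
    (x y : Fin d → (Fin (tauInv S d) → S))
    (hx : Subgroup.closure (Set.range x) = ⊤)
    (hy : Subgroup.closure (Set.range y) = ⊤) :
    ∃ k : MulAut (Fin (tauInv S d) → S), ∀ i, k (x i) = y i := by
  obtain ⟨u, v, huv⟩ := hna
  have : Nontrivial S := ⟨⟨u * v, v * u, huv⟩⟩
  classical
  set Q := Quot (autOrbitRel S d) with hQ
  have hfinQ : Finite Q := Quot.finite _
  -- columns of x and y as generating d-tuples of S
  let cx : Fin (tauInv S d) → Q := fun j => Quot.mk _ ⟨fun i => x i j, col_gen hx j⟩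
  let cy : Fin (tauInv S d) → Q := fun j => Quot.mk _ ⟨fun i => y i j, col_gen hy j⟩
  have key : ∀ {z : Fin d → (Fin (tauInv S d) → S)}
      (hz : Subgroup.closure (Set.range z) = ⊤),
      Function.Injective (fun j => (Quot.mk (autOrbitRel S d)
        ⟨fun i => z i j, col_gen hz j⟩ : Q)) := by
    intro z hz a b hab
    have h1 : autOrbitRel S d ⟨fun i => z i a, col_gen hz a⟩ ⟨fun i => z i b, col_gen hz b⟩ :=
      ((autOrbitRel_equivalence S d).eqvGen_iff).mp (Quot.eq.mp hab)
    obtain ⟨φ, hφ⟩ := h1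
    exact col_inj hz φ hφ
  have hcard : Nat.card (Fin (tauInv S d)) = Nat.card Q := by
    simp [tauInv, hQ]
  have hbx : Function.Bijective cx :=
    (Nat.bijective_iff_injective_and_card cx).mpr ⟨key hx, hcard⟩
  have hby : Function.Bijective cy :=
    (Nat.bijective_iff_injective_and_card cy).mpr ⟨key hy, hcard⟩
  let ex := Equiv.ofBijective cx hbx
  let ey := Equiv.ofBijective cy hby
  let σ : Equiv.Perm (Fin (tauInv S d)) := ey.trans ex.symm
  have hσ : ∀ j, cx (σ j) = cy j := fun j => ex.apply_symm_apply (ey j)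
  have hrel : ∀ j, autOrbitRel S d ⟨fun i => x i (σ j), col_gen hx (σ j)⟩
      ⟨fun i => y i j, col_gen hy j⟩ := fun j =>
    ((autOrbitRel_equivalence S d).eqvGen_iff).mp (Quot.eq.mp (hσ j))
  choose φ hφ using hrel
  refine ⟨(permMulAut σ).trans (MulEquiv.piCongrRight φ), fun i => ?_⟩
  funext j
  exact hφ j i
end

section
/- Let G be a finite group and let Φ denote the Frattini subgroup of G. Then G has non-zero spread (i.e., for every g ≠ 1 there exist x₁,…,x_{d−1} with ⟨g, x₁,…,x_{d−1}⟩ = G, where d = d(G)) if and only if G is efficiently generated (for all x ∈ G, d_{{x}}(G) = d(G) implies x ∈ Φ) and Φ = 1. -/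
/-- `d_{{x}}(G)`: the minimal number of elements of `G` generating `G` together
with the element `x`. -/
noncomputable def dWith {G : Type*} [Group G] (x : G) : ℕ :=
  sInf {k : ℕ | ∃ y : Fin k → G, Subgroup.closure ({x} ∪ Set.range y) = ⊤}

/-
For every `x` one has `d_{{x}}(G) ≤ d(G)`, with equality when `x ∈ Φ`, since
Frattini elements can be dropped from any generating set. Non-zero spread says precisely
that `d_{{g}}(G) ≤ d(G) - 1 < d(G)` for every `g ≠ 1`. Thus non-zero spread forces every `x`
with `d_{{x}}(G) = d(G)` to be trivial, and in particular `Φ = 1`. Conversely, if `Φ = 1`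
and `G` is efficiently generated, then `d_{{g}}(G) ≠ d(G)` for `g ≠ 1`, so `d_{{g}}(G) < d(G)`.
-/

open Subgroup

section

variable {G : Type*} [Group G]

theorem Group.rank_le_of_closure_range_eq_top [Group.FG G] {k : ℕ} {y : Fin k → G}
    (hy : closure (Set.range y) = ⊤) : Group.rank G ≤ k := by
  classical
  calc Group.rank G ≤ (Finset.univ.image y).card := Group.rank_le (by simpa using hy)
    _ ≤ k := Finset.card_image_le.trans (by simp)

theorem Group.exists_closure_range_eq_top [Group.FG G] :
    ∃ y : Fin (Group.rank G) → G, closure (Set.range y) = ⊤ := by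
  obtain ⟨S, hcard, hS⟩ := Group.rank_spec G
  refine ⟨fun i => (S.equivFinOfCardEq hcard).symm i, ?_⟩
  rw [← hS, ← Subtype.range_coe (s := (S : Set G))]
  exact congrArg _ ((S.equivFinOfCardEq hcard).symm.surjective.range_comp _)

theorem dWith_le_of_closure_eq_top {x : G} {k : ℕ} {y : Fin k → G}
    (h : closure ({x} ∪ Set.range y) = ⊤) : dWith x ≤ k :=
  Nat.sInf_le ⟨y, h⟩

theorem exists_closure_insert_range_eq_top [Group.FG G] (x : G) :
    ∃ y : Fin (Group.rank G) → G, closure ({x} ∪ Set.range y) = ⊤ := by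
  obtain ⟨y, hy⟩ := Group.exists_closure_range_eq_top (G := G)
  exact ⟨y, top_unique (hy ▸ Subgroup.closure_mono Set.subset_union_right)⟩

theorem dWith_le_rank [Group.FG G] (x : G) : dWith x ≤ Group.rank G :=
  (exists_closure_insert_range_eq_top x).elim fun _ hy => dWith_le_of_closure_eq_top hy

theorem dWith_le_iff [Group.FG G] {x : G} {k : ℕ} :
    dWith x ≤ k ↔ ∃ y : Fin k → G, closure ({x} ∪ Set.range y) = ⊤ := by
  refine ⟨fun hk => ?_, fun ⟨y, hy⟩ => dWith_le_of_closure_eq_top hy⟩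
  obtain ⟨y, hy⟩ : dWith x ∈ {k : ℕ | ∃ y : Fin k → G, closure ({x} ∪ Set.range y) = ⊤} :=
    Nat.sInf_mem ⟨_, exists_closure_insert_range_eq_top x⟩
  -- pad `y` with copies of `1` to a family indexed by `Fin k`
  refine ⟨fun i => if h : (i : ℕ) < dWith x then y ⟨i, h⟩ else 1, top_unique (hy ▸ ?_)⟩
  refine Subgroup.closure_mono (Set.union_subset_union_right _ ?_)
  rintro _ ⟨j, rfl⟩
  exact ⟨Fin.castLE hk j, by simp⟩

theorem dWith_eq_rank_of_mem_frattini [Group.FG G] [IsCoatomic (Subgroup G)] {x : G}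
    (hx : x ∈ frattini G) : dWith x = Group.rank G := by
  refine le_antisymm (dWith_le_rank x) ?_
  obtain ⟨y, hy⟩ := (dWith_le_iff (x := x)).mp le_rfl
  refine Group.rank_le_of_closure_range_eq_top
    (frattini_nongenerating (K := closure (Set.range y)) (top_unique ?_))
  rw [← hy, Subgroup.closure_union, sup_comm]
  exact sup_le_sup_left ((closure_le _).mpr (Set.singleton_subset_iff.mpr hx)) _

end

theorem stmt_16 {G : Type*} [Group G] [Finite G] (d : ℕ) (hd : d = Group.rank G) :
    (∀ g : G, g ≠ 1 →
        ∃ x : Fin (d - 1) → G, Subgroup.closure ({g} ∪ Set.range x) = ⊤) ↔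
      ((∀ x : G, dWith x = d → x ∈ frattini G) ∧ frattini G = ⊥) := by
  subst hd
  simp only [← dWith_le_iff]
  have hrank_pos : ∀ g : G, g ≠ 1 → 0 < Group.rank G := fun g hg =>
    haveI : Nontrivial G := ⟨⟨g, 1, hg⟩⟩
    Group.rank_pos G
  constructor
  · intro hspread
    have hlt : ∀ g : G, g ≠ 1 → dWith g < Group.rank G := fun g hg => by
      have := hspread g hg
      have := hrank_pos g hg
      omega
    refine ⟨fun x hx => ?_, (eq_bot_iff_forall _).mpr fun g hg => ?_⟩
    · by_cases hx1 : x = 1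
      · exact hx1 ▸ one_mem _
      · exact absurd hx (hlt x hx1).ne
    · by_contra hg1
      exact (hlt g hg1).ne (dWith_eq_rank_of_mem_frattini hg)
  · rintro ⟨heff, hΦ⟩ g hg
    have hne : dWith g ≠ Group.rank G := fun h => hg (by simpa [hΦ] using heff g h)
    have hle := dWith_le_rank g
    omega
end

section
/- Let G be a finite group, K ≤ G a subgroup, s a non-negative integer, and let μ_G denote the Möbius function on the subgroup lattice of G. Then the number of s-tuples (y₁,…,y_s) ∈ G^s with ⟨K, y₁,…,y_s⟩ = G equals Σ_{K ≤ H ≤ G} μ_G(H)|H|^s. -/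
open scoped Classical

theorem stmt_18 {G : Type*} [Group G] [Finite G] (K : Subgroup G) (s : ℕ)
    (μ : Subgroup G → ℤ)
    (hμ : ∀ H : Subgroup G,
      (∑ᶠ (K' : Subgroup G) (_ : H ≤ K'), μ K') = if H = ⊤ then 1 else 0) :
    (Nat.card {y : Fin s → G //
        Subgroup.closure ((K : Set G) ∪ Set.range y) = ⊤} : ℤ) =
      ∑ᶠ (H : Subgroup G) (_ : K ≤ H), μ H * (Nat.card H : ℤ) ^ s := by
  cases nonempty_fintype G
  have hcond : ∀ (P : Subgroup G → Prop) (f : Subgroup G → ℤ),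
      (∑ᶠ (H : Subgroup G) (_ : P H), f H) = ∑ H ∈ Finset.univ.filter P, f H := by
    intro P f
    exact finsum_cond_eq_sum_of_cond_iff f (fun {x} _ => by simp)
  rw [hcond]
  have hμ' : ∀ H : Subgroup G,
      (∑ K' ∈ Finset.univ.filter (H ≤ ·), μ K') = if H = ⊤ then 1 else 0 := by
    intro H; rw [← hcond]; exact hμ H
  -- count of tuples landing in H
  have hcount : ∀ H : Subgroup G,
      ((Nat.card H : ℤ)) ^ s =
        ∑ _y ∈ Finset.univ.filter (fun y : Fin s → G => ∀ i, y i ∈ H), (1 : ℤ) := by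
    intro H
    rw [Finset.sum_const, nsmul_eq_mul, mul_one]
    have : Finset.univ.filter (fun y : Fin s → G => ∀ i, y i ∈ H)
        = Fintype.piFinset (fun _ : Fin s => (H : Set G).toFinset) := by
      ext y; simp
    rw [this, Fintype.card_piFinset]
    simp [Set.toFinset_card, Nat.card_eq_fintype_card]
  have key : ∀ y : Fin s → G,
      (∑ H ∈ Finset.univ.filter (fun H : Subgroup G => K ≤ H ∧ ∀ i, y i ∈ H), μ H)
        = if Subgroup.closure ((K : Set G) ∪ Set.range y) = ⊤ then 1 else 0 := by
    intro y
    rw [← hμ' (Subgroup.closure ((K : Set G) ∪ Set.range y))]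
    congr 1
    ext H
    simp only [Finset.mem_filter, Finset.mem_univ, true_and]
    rw [Subgroup.closure_le]
    constructor
    · rintro ⟨h1, h2⟩
      rintro x (hx | ⟨i, rfl⟩)
      · exact h1 hx
      · exact h2 i
    · intro h
      refine ⟨fun x hx => h (Or.inl hx), fun i => h (Or.inr ⟨i, rfl⟩)⟩
  calc (Nat.card {y : Fin s → G //
        Subgroup.closure ((K : Set G) ∪ Set.range y) = ⊤} : ℤ)
      = ∑ y : Fin s → G,
          if Subgroup.closure ((K : Set G) ∪ Set.range y) = ⊤ then (1 : ℤ) else 0 := by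
        rw [Nat.card_eq_fintype_card, Fintype.card_subtype, ← Finset.sum_boole]
    _ = ∑ y : Fin s → G, ∑ H ∈ Finset.univ.filter
          (fun H : Subgroup G => K ≤ H ∧ ∀ i, y i ∈ H), μ H := by
        simp_rw [key]
    _ = ∑ y : Fin s → G, ∑ H : Subgroup G,
          if K ≤ H ∧ ∀ i, y i ∈ H then μ H else 0 := by
        simp_rw [Finset.sum_filter]
    _ = ∑ H : Subgroup G, ∑ y : Fin s → G,
          if K ≤ H ∧ ∀ i, y i ∈ H then μ H else 0 := Finset.sum_comm
    _ = ∑ H ∈ Finset.univ.filter (fun H : Subgroup G => K ≤ H), μ H * (Nat.card H : ℤ) ^ s := by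
        rw [Finset.sum_filter]
        refine Finset.sum_congr rfl fun H _ => ?_
        by_cases hK : K ≤ H
        · simp only [hK, true_and, if_true]
          rw [hcount H, Finset.mul_sum, mul_one, Finset.sum_filter]
        · simp [hK]
end

section
/- Let Γ₁ and Γ₂ be finite connected graphs that are not bipartite (each contains an odd closed walk). Then the tensor (categorical) product graph Γ₁ × Γ₂ is connected. -/
/-- The tensor (categorical) product of two simple graphs: `(u₁, u₂) ~ (v₁, v₂)`
iff `u₁ ~ v₁` and `u₂ ~ v₂`. -/
def tensorProd {V₁ V₂ : Type*} (G₁ : SimpleGraph V₁) (G₂ : SimpleGraph V₂) :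
    SimpleGraph (V₁ × V₂) where
  Adj u v := G₁.Adj u.1 v.1 ∧ G₂.Adj u.2 v.2
  symm := ⟨fun _ _ h => ⟨h.1.symm, h.2.symm⟩⟩
  loopless := ⟨fun u h => G₁.loopless.irrefl u.1 h.1⟩

/-!
Walks in `Γ₁ × Γ₂` are exactly pairs of walks of the same length. In a connected graph with an
odd closed walk, any two vertices are joined by walks of both parities, and going back and forth
along an edge lengthens a walk by two; hence they are joined by walks of every large enough
length, and two such lengths can always be matched.
-/

open Filter SimpleGraph

lemma reachable_tensorProd_of_length_eq {V₁ V₂ : Type*} {G₁ : SimpleGraph V₁}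
    {G₂ : SimpleGraph V₂} {a c : V₁} {b d : V₂} (p : G₁.Walk a c) (q : G₂.Walk b d)
    (h : p.length = q.length) : (tensorProd G₁ G₂).Reachable (a, b) (c, d) := by
  induction p generalizing b with
  | nil =>
    cases q with
    | nil => rfl
    | cons => simp at h
  | cons hp p ih =>
    cases q with
    | nil => simp at h
    | cons hq q =>
      have hpq : p.length = q.length := by simpa using h
      exact (Adj.reachable (G := tensorProd G₁ G₂) ⟨hp, hq⟩).trans (ih q hpq)

namespace SimpleGraph.Walk

variable {V : Type*} {G : SimpleGraph V}

lemma exists_length_eq_add_two_mul {u v w : V} (h : G.Adj u w) (p : G.Walk u v) (k : ℕ) :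
    ∃ q : G.Walk u v, q.length = p.length + 2 * k := by
  induction k with
  | zero => exact ⟨p, rfl⟩
  | succ k ih =>
    obtain ⟨q, hq⟩ := ih
    exact ⟨cons h (cons h.symm q), by simp [hq]; ring⟩

end SimpleGraph.Walk

lemma SimpleGraph.Connected.eventually_exists_walk_length_eq {V : Type*} {G : SimpleGraph V}
    (hG : G.Connected) (hodd : ∃ (x : V) (c : G.Walk x x), Odd c.length) (u v : V) :
    ∀ᶠ n in atTop, ∃ p : G.Walk u v, p.length = n := by
  obtain ⟨x, c, t, hc⟩ := hodd
  obtain ⟨p₀⟩ := hG u v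
  obtain ⟨r⟩ := hG u x
  -- `p₁` detours around the odd closed walk, so its length has the other parity.
  set p₁ : G.Walk u v := (r.append c).append (r.reverse.append p₀)
  have hp₁ : p₁.length = p₀.length + c.length + 2 * r.length := by
    simp only [p₁, Walk.length_append, Walk.length_reverse]; ring
  have hu : G.Adj u p₁.snd := Walk.adj_snd (Walk.not_nil_iff_lt_length.2 (by omega))
  refine eventually_atTop.2 ⟨p₁.length, fun n hn => ?_⟩
  obtain ⟨p, k, hk⟩ : ∃ (p : G.Walk u v) (k : ℕ), n = p.length + 2 * k := by
    rcases Nat.even_or_odd (n - p₀.length) with ⟨k, hk⟩ | ⟨k, hk⟩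
    · exact ⟨p₀, k, by omega⟩
    · exact ⟨p₁, (n - p₁.length) / 2, by omega⟩
  obtain ⟨q, hq⟩ := p.exists_length_eq_add_two_mul hu k
  exact ⟨q, hq.trans hk.symm⟩

theorem stmt_19_general {V₁ V₂ : Type*}
    (G₁ : SimpleGraph V₁) (G₂ : SimpleGraph V₂)
    (h₁ : G₁.Connected) (h₂ : G₂.Connected)
    (hodd₁ : ∃ (v : V₁) (w : G₁.Walk v v), Odd w.length)
    (hodd₂ : ∃ (v : V₂) (w : G₂.Walk v v), Odd w.length) :
    (tensorProd G₁ G₂).Connected := by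
  have : Nonempty (V₁ × V₂) := ⟨(h₁.nonempty.some, h₂.nonempty.some)⟩
  refine ⟨fun ⟨a, b⟩ ⟨c, d⟩ => ?_⟩
  obtain ⟨n, ⟨p, hp⟩, ⟨q, hq⟩⟩ :=
    ((h₁.eventually_exists_walk_length_eq hodd₁ a c).and
      (h₂.eventually_exists_walk_length_eq hodd₂ b d)).exists
  exact reachable_tensorProd_of_length_eq p q (hp.trans hq.symm)

theorem stmt_19 {V₁ V₂ : Type*} [Finite V₁] [Finite V₂]
    (G₁ : SimpleGraph V₁) (G₂ : SimpleGraph V₂)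
    (h₁ : G₁.Connected) (h₂ : G₂.Connected)
    (hodd₁ : ∃ (v : V₁) (w : G₁.Walk v v), Odd w.length)
    (hodd₂ : ∃ (v : V₂) (w : G₂.Walk v v), Odd w.length) :
    (tensorProd G₁ G₂).Connected :=
  stmt_19_general G₁ G₂ h₁ h₂ hodd₁ hodd₂
end
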